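/- arXiv:0808.3392 — 9 statements merged into one kernel-verified Lean document; each statement's English description precedes it below -/
import Mathlib

section
/- Let K be a commutative ring, let A, B, d ∈ K, and let G be a looped graph on n ≥ 2 vertices with two distinct vertices a and b that are adjacent and both unlooped (i.e. the Boolean adjacency matrix M of G satisfies M_{ab} = 1 and M_{aa} = M_{bb} = 0). Then [G](A,B,d) = A²·[G^{ab}−a−b](A,B,d) + A·B·[(G^{ab})^a−a−b](A,B,d) + B·[G^a−a](A,B,d). -/
open Matrix BigOperators

/-- The graph bracket polynomial of a looped graph specified by its Boolean
adjacency matrix `M` over `GF(2)`: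
`[G](A,B,d) = ∑_Δ A^{ν(Δ)} B^{ρ(Δ)} d^{ν(M+Δ)}`, the sum over all diagonal
matrices `Δ` over `GF(2)` (encoded by their diagonal functions `f`). -/
noncomputable def gBracket {V : Type*} [Fintype V] [DecidableEq V] {K : Type*} [CommRing K]
    (M : Matrix V V (ZMod 2)) (A B d : K) : K :=
  ∑ f : V → ZMod 2,
    A ^ (Fintype.card V - (Matrix.diagonal f).rank)
      * B ^ (Matrix.diagonal f).rank
      * d ^ (Fintype.card V - (M + Matrix.diagonal f).rank)

/-!
Split the state sum according to `Δ a a`. If `Δ a a = 1`, vertex `a` is looped in `M + Δ`, and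
the Schur complement of its `1 × 1` block is `G^a - a` plus the rest of `Δ`: the size, the rank
and `ρ(Δ)` all drop by one, which leaves the factor `B`. If `Δ a a = 0`, split further according
to `c = Δ b b`: the block of `M + Δ` on `{a, b}` is `(0 1; 1 c)`, which is invertible, and over
`GF(2)` its Schur complement is `M x y + M x a M y b + M x b M y a + c M x a M y a`, that is
`G^{ab} - a - b` or `(G^{ab})^a - a - b`; size and rank drop by two and `ρ(Δ)` by `c`, which
leaves the factor `A²` or `AB`.
-/

theorem ZMod.sum_univ_two {β : Type*} [AddCommMonoid β] (G : ZMod 2 → β) :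
    ∑ t, G t = G 0 + G 1 :=
  Fin.sum_univ_two G

section Sums

variable {V : Type*} [Fintype V] [DecidableEq V]

theorem Fintype.sum_eq_add_add_sum_subtype_ne_ne {M : Type*} [AddCommMonoid M] (g : V → M)
    {a b : V} (hab : a ≠ b) :
    ∑ i, g i = g a + g b + ∑ i : {i // i ≠ a ∧ i ≠ b}, g i := by
  rw [← Fintype.sum_subtype_add_sum_subtype (fun i => i ≠ a ∧ i ≠ b), add_comm,
    ← Finset.sum_subtype {a, b} (by simp [or_iff_not_imp_left]) g, Finset.sum_pair hab]

theorem Fintype.card_eq_card_subtype_ne_add_one (a : V) :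
    Fintype.card V = Fintype.card {z // z ≠ a} + 1 := by
  rw [Fintype.card_eq_sum_ones, Fintype.card_eq_sum_ones, Fintype.sum_eq_add_sum_subtype_ne _ a,
    add_comm]

theorem Fintype.card_eq_card_subtype_ne_ne_add_two {a b : V} (hab : a ≠ b) :
    Fintype.card V = Fintype.card {z // z ≠ a ∧ z ≠ b} + 2 := by
  rw [Fintype.card_eq_sum_ones, Fintype.card_eq_sum_ones,
    Fintype.sum_eq_add_add_sum_subtype_ne_ne _ hab, add_comm]

theorem Fintype.sum_eq_sum_sum_funSplitAt {R β : Type*} [Fintype R] [AddCommMonoid β] (a : V)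
    (G : (V → R) → β) :
    ∑ f, G f = ∑ t, ∑ g : {z // z ≠ a} → R, G ((Equiv.funSplitAt a R).symm (t, g)) := by
  rw [← Fintype.sum_prod_type']
  exact (Equiv.sum_comp (Equiv.funSplitAt a R).symm G).symm

theorem Fintype.sum_comp_subtype_ne_ne {R β : Type*} [Fintype R] [AddCommMonoid β] {a b : V}
    (hab : a ≠ b) (G : ({z // z ≠ a ∧ z ≠ b} → R) → β) :
    ∑ h : {j : {z // z ≠ a} // j ≠ ⟨b, hab.symm⟩} → R,
      G (fun x => h ⟨⟨x, x.2.1⟩, fun hx => x.2.2 (congrArg Subtype.val hx)⟩) = ∑ h, G h :=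
  let σ : {j : {z // z ≠ a} // j ≠ ⟨b, hab.symm⟩} ≃ {z // z ≠ a ∧ z ≠ b} :=
    { toFun j := ⟨j, j.1.2, fun hj => j.2 (Subtype.ext hj)⟩
      invFun x := ⟨⟨x, x.2.1⟩, fun hx => x.2.2 (congrArg Subtype.val hx)⟩ }
  Fintype.sum_equiv (σ.arrowCongr (Equiv.refl R)) _ _ fun _ => rfl

end Sums

theorem Function.bijective_sumElim_subtypeVal {V κ : Type*} {p : V → Prop} {k : κ → V}
    (hk : Function.Injective k) (hrange : ∀ z, ¬p z ↔ z ∈ Set.range k) :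
    Function.Bijective (Sum.elim (Subtype.val : {z // p z} → V) k) := by
  refine ⟨Subtype.val_injective.sumElim hk fun x u h => (hrange _).2 ⟨u, h.symm⟩ x.2,
    fun z => ?_⟩
  by_cases hz : p z
  · exact ⟨Sum.inl ⟨z, hz⟩, rfl⟩
  · obtain ⟨u, rfl⟩ := (hrange z).1 hz
    exact ⟨Sum.inr u, rfl⟩

section Rank

variable {F : Type*} [Field F]

theorem Submodule.finrank_prod {M N : Type*} [AddCommGroup M] [Module F M] [AddCommGroup N]
    [Module F N] [FiniteDimensional F M] [FiniteDimensional F N]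
    (p : Submodule F M) (q : Submodule F N) :
    Module.finrank F (p.prod q) = Module.finrank F p + Module.finrank F q := by
  let e : p.prod q ≃ₗ[F] p × q :=
    { toFun x := (⟨x.1.1, x.2.1⟩, ⟨x.1.2, x.2.2⟩)
      invFun x := ⟨(x.1, x.2), x.1.2, x.2.2⟩
      map_add' _ _ := rfl
      map_smul' _ _ := rfl }
  rw [e.finrank_eq, Module.finrank_prod]

theorem Matrix.rank_fromBlocks_zero_zero {ι κ : Type*} [Fintype ι] [Fintype κ] [DecidableEq ι]
    [DecidableEq κ] (A : Matrix ι ι F) (D : Matrix κ κ F) :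
    (fromBlocks A 0 0 D).rank = A.rank + D.rank := by
  have h := LinearMap.toMatrix_prodMap (Pi.basisFun F ι) (Pi.basisFun F κ) A.toLin' D.toLin'
  simp only [LinearMap.toMatrix_eq_toMatrix', LinearMap.toMatrix'_toLin'] at h
  rw [← h, Matrix.rank_eq_finrank_range_toLin _ ((Pi.basisFun F ι).prod (Pi.basisFun F κ))
    ((Pi.basisFun F ι).prod (Pi.basisFun F κ)), Matrix.toLin_toMatrix, LinearMap.range_prodMap,
    Submodule.finrank_prod, Matrix.rank, Matrix.rank]
  rfl

theorem Matrix.rank_fromBlocks_of_isUnit_det₂₂ {ι κ : Type*} [Fintype ι] [Fintype κ]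
    [DecidableEq ι] [DecidableEq κ] (A : Matrix ι ι F) (B : Matrix ι κ F) (C : Matrix κ ι F)
    (D : Matrix κ κ F) (hD : IsUnit D.det) :
    (fromBlocks A B C D).rank = (A - B * D⁻¹ * C).rank + Fintype.card κ := by
  let := D.invertibleOfIsUnitDet hD
  rw [fromBlocks_eq_of_invertible₂₂, invOf_eq_nonsing_inv,
    rank_mul_eq_left_of_isUnit_det _ _ (by simp),
    rank_mul_eq_right_of_isUnit_det _ _ (by simp),
    rank_fromBlocks_zero_zero, rank_of_isUnit D ((isUnit_iff_isUnit_det D).2 hD)]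

theorem Matrix.rank_eq_rank_schur_add_card {V ι κ : Type*} [Fintype V] [Fintype ι] [Fintype κ]
    [DecidableEq ι] [DecidableEq κ] (P : Matrix V V F) (i : ι → V) (k : κ → V)
    (hik : Function.Bijective (Sum.elim i k)) (hD : IsUnit (P.submatrix k k).det) :
    P.rank = (P.submatrix i i - P.submatrix i k * (P.submatrix k k)⁻¹ * P.submatrix k i).rank
      + Fintype.card κ := by
  rw [← rank_submatrix P (Equiv.ofBijective _ hik) (Equiv.ofBijective _ hik),
    ← rank_fromBlocks_of_isUnit_det₂₂ _ _ _ _ hD]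
  congr 1
  ext (x | x) (y | y) <;> rfl

variable {V : Type*} [Fintype V] [DecidableEq V]

theorem Matrix.rank_eq_rank_pivot_add_one (P : Matrix V V F) (a : V) (hPaa : P a a ≠ 0) :
    P.rank = (of fun x y : {z // z ≠ a} => P x y - P x a * (P a a)⁻¹ * P a y).rank + 1 := by
  have hbij : Function.Bijective
      (Sum.elim (Subtype.val : {z // z ≠ a} → V) fun _ : Unit => a) :=
    Function.bijective_sumElim_subtypeVal (fun _ _ _ => rfl) (by simp [eq_comm])
  have hinv : P.submatrix (fun _ : Unit => a) (fun _ => a)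
      * (of fun _ _ => (P a a)⁻¹ : Matrix Unit Unit F) = 1 := by
    ext; simp [mul_apply, hPaa]
  rw [rank_eq_rank_schur_add_card P _ _ hbij (isUnit_det_of_right_inverse hinv),
    inv_eq_right_inv hinv, Fintype.card_unit]
  congr 2
  ext x y
  simp [mul_apply]

theorem Matrix.rank_eq_rank_pivot₂_add_two (P : Matrix V V F) {a b : V} (hab : a ≠ b)
    (hPaa : P a a = 0) (hPab : P a b = 1) (hPba : P b a = 1) :
    P.rank = (of fun x y : {z // z ≠ a ∧ z ≠ b} =>
      P x y - P x a * P b y - P x b * P a y + P b b * P x a * P a y).rank + 2 := by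
  have hbij : Function.Bijective
      (Sum.elim (Subtype.val : {z // z ≠ a ∧ z ≠ b} → V) ![a, b]) :=
    Function.bijective_sumElim_subtypeVal
      (by simp [Function.Injective, Fin.forall_fin_two, hab, hab.symm])
      (fun z => by
        simp only [ne_eq, not_and, Decidable.not_not, range_cons, range_empty, Set.union_empty,
          Set.union_singleton, Set.mem_insert_iff, Set.mem_singleton_iff]
        tauto)
  have hD : P.submatrix ![a, b] ![a, b] = !![P a a, P a b; P b a, P b b] := by
    ext i j; fin_cases i <;> fin_cases j <;> rfl
  have hinv : P.submatrix ![a, b] ![a, b] * !![-P b b, 1; 1, 0] = 1 := by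
    rw [hD, mul_fin_two, hPaa, hPab, hPba, one_fin_two]; simp
  rw [rank_eq_rank_schur_add_card P _ _ hbij (isUnit_det_of_right_inverse hinv),
    inv_eq_right_inv hinv, Fintype.card_fin]
  congr 2
  ext x y
  simp only [of_apply, sub_apply, mul_apply, submatrix_apply, Fin.sum_univ_two, Fin.isValue,
    cons_val_zero, cons_val_one, cons_val', cons_val_fin_one, mul_neg, mul_one, mul_zero, add_zero]
  ring

theorem Matrix.rank_diagonal_eq_sum [DecidableEq F] (f : V → F) :
    (diagonal f).rank = ∑ i, if f i = 0 then 0 else 1 := by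
  simp [rank_diagonal, Fintype.card_subtype, Finset.card_filter]

theorem Matrix.rank_diagonal_eq_rank_diagonal_subtype_ne_add [DecidableEq F] (f : V → F)
    (a : V) :
    (diagonal f).rank = (diagonal fun x : {z // z ≠ a} => f x).rank
      + if f a = 0 then 0 else 1 := by
  rw [rank_diagonal_eq_sum, rank_diagonal_eq_sum, Fintype.sum_eq_add_sum_subtype_ne _ a, add_comm]

theorem Matrix.rank_diagonal_eq_rank_diagonal_subtype_ne_ne_add [DecidableEq F] (f : V → F)
    {a b : V} (hab : a ≠ b) :
    (diagonal f).rank = (diagonal fun x : {z // z ≠ a ∧ z ≠ b} => f x).rank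
      + (if f a = 0 then 0 else 1) + if f b = 0 then 0 else 1 := by
  rw [rank_diagonal_eq_sum, rank_diagonal_eq_sum, Fintype.sum_eq_add_add_sum_subtype_ne_ne _ hab]
  ring

end Rank

section GraphBracket

variable {V : Type*} [Fintype V] [DecidableEq V] {K : Type*} [CommRing K]

theorem rank_add_diagonal_eq_localComplement (M : Matrix V V (ZMod 2)) (hsym : M.IsSymm) {a : V}
    (hMaa : M a a = 0) (f : V → ZMod 2) (hfa : f a = 1) :
    (M + diagonal f).rank = (of (fun x y : {z // z ≠ a} => M x.1 y.1 + M x.1 a * M y.1 a)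
      + diagonal fun x : {z // z ≠ a} => f x).rank + 1 := by
  rw [rank_eq_rank_pivot_add_one _ a (by simp [hMaa, hfa])]
  congr 2
  ext x y
  simp only [of_apply, Matrix.add_apply, diagonal_apply_eq, diagonal_apply, hMaa, hfa, zero_add,
    inv_one, mul_one, CharTwo.sub_eq_add, x.2, Ne.symm y.2, if_false, add_zero, hsym.apply a y,
    Subtype.ext_iff]
  ring

theorem rank_add_diagonal_eq_pivot (M : Matrix V V (ZMod 2)) (hsym : M.IsSymm) {a b : V}
    (hab : a ≠ b) (hMab : M a b = 1) (hMaa : M a a = 0) (hMbb : M b b = 0) (f : V → ZMod 2)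
    (hfa : f a = 0) :
    (M + diagonal f).rank = (of (fun x y : {z // z ≠ a ∧ z ≠ b} =>
      M x.1 y.1 + M x.1 a * M y.1 b + M x.1 b * M y.1 a + f b * (M x.1 a * M y.1 a))
      + diagonal fun x : {z // z ≠ a ∧ z ≠ b} => f x).rank + 2 := by
  rw [rank_eq_rank_pivot₂_add_two _ hab (by simp [hMaa, hfa]) (by simp [hab, hMab])
    (by simp [hab.symm, hsym.apply a b, hMab])]
  congr 2
  ext x y
  simp only [of_apply, Matrix.add_apply, diagonal_apply_eq, diagonal_apply, CharTwo.sub_eq_add,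
    hMbb, zero_add, x.2.1, x.2.2, Ne.symm y.2.1, Ne.symm y.2.2, if_false, add_zero,
    hsym.apply a y, hsym.apply b y, Subtype.ext_iff]
  ring

noncomputable def gBracketTerm (M : Matrix V V (ZMod 2)) (A B d : K) (f : V → ZMod 2) : K :=
  A ^ (Fintype.card V - (diagonal f).rank) * B ^ (diagonal f).rank
    * d ^ (Fintype.card V - (M + diagonal f).rank)

theorem gBracket_eq_sum_gBracketTerm (M : Matrix V V (ZMod 2)) (A B d : K) :
    gBracket M A B d = ∑ f, gBracketTerm M A B d f := rfl

theorem gBracketTerm_eq_mul {W : Type*} [Fintype W] [DecidableEq W] (M : Matrix V V (ZMod 2))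
    (N : Matrix W W (ZMod 2)) (A B d : K) (f : V → ZMod 2) (g : W → ZMod 2) {j k : ℕ}
    (hjk : j ≤ k) (hcard : Fintype.card V = Fintype.card W + k)
    (hdiag : (diagonal f).rank = (diagonal g).rank + j)
    (hrank : (M + diagonal f).rank = (N + diagonal g).rank + k) :
    gBracketTerm M A B d f = A ^ (k - j) * B ^ j * gBracketTerm N A B d g := by
  have hg := rank_le_card_width (diagonal g)
  have hN := rank_le_card_width (N + diagonal g)
  rw [gBracketTerm, gBracketTerm, hcard, hdiag, hrank,
    show Fintype.card W + k - ((diagonal g).rank + j)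
      = (k - j) + (Fintype.card W - (diagonal g).rank) by omega,
    show Fintype.card W + k - ((N + diagonal g).rank + k)
      = Fintype.card W - (N + diagonal g).rank by omega]
  ring

theorem gBracketTerm_localComplement (M : Matrix V V (ZMod 2)) (hsym : M.IsSymm) {a : V}
    (hMaa : M a a = 0) (A B d : K) (f : V → ZMod 2) (hfa : f a = 1) :
    gBracketTerm M A B d f = B * gBracketTerm (of fun x y : {z // z ≠ a} =>
      M x.1 y.1 + M x.1 a * M y.1 a) A B d (fun x => f x) := by
  rw [gBracketTerm_eq_mul M _ A B d f _ le_rfl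
    (Fintype.card_eq_card_subtype_ne_add_one a)
    (by simp [rank_diagonal_eq_rank_diagonal_subtype_ne_add f a, hfa])
    (rank_add_diagonal_eq_localComplement M hsym hMaa f hfa)]
  simp

theorem gBracketTerm_pivot (M : Matrix V V (ZMod 2)) (hsym : M.IsSymm) {a b : V} (hab : a ≠ b)
    (hMab : M a b = 1) (hMaa : M a a = 0) (hMbb : M b b = 0) (A B d : K) (f : V → ZMod 2)
    (hfa : f a = 0) (hfb : f b = 0) :
    gBracketTerm M A B d f = A ^ 2 * gBracketTerm (of fun x y : {z // z ≠ a ∧ z ≠ b} =>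
      M x.1 y.1 + M x.1 a * M y.1 b + M x.1 b * M y.1 a) A B d (fun x => f x) := by
  rw [gBracketTerm_eq_mul M _ A B d f (fun x : {z // z ≠ a ∧ z ≠ b} => f x) (Nat.zero_le 2)
    (Fintype.card_eq_card_subtype_ne_ne_add_two hab)
    (by simp [rank_diagonal_eq_rank_diagonal_subtype_ne_ne_add f hab, hfa, hfb])
    (by simpa [hfb] using rank_add_diagonal_eq_pivot M hsym hab hMab hMaa hMbb f hfa)]
  simp

theorem gBracketTerm_pivot_localComplement (M : Matrix V V (ZMod 2)) (hsym : M.IsSymm) {a b : V}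
    (hab : a ≠ b) (hMab : M a b = 1) (hMaa : M a a = 0) (hMbb : M b b = 0) (A B d : K)
    (f : V → ZMod 2) (hfa : f a = 0) (hfb : f b = 1) :
    gBracketTerm M A B d f = A * B * gBracketTerm (of fun x y : {z // z ≠ a ∧ z ≠ b} =>
      M x.1 y.1 + M x.1 a * M y.1 b + M x.1 b * M y.1 a + M x.1 a * M y.1 a) A B d
        (fun x => f x) := by
  rw [gBracketTerm_eq_mul M _ A B d f (fun x : {z // z ≠ a ∧ z ≠ b} => f x) one_le_two
    (Fintype.card_eq_card_subtype_ne_ne_add_two hab)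
    (by simp [rank_diagonal_eq_rank_diagonal_subtype_ne_ne_add f hab, hfa, hfb])
    (by simpa [hfb] using rank_add_diagonal_eq_pivot M hsym hab hMab hMaa hMbb f hfa)]
  simp

theorem sum_gBracketTerm_funSplitAt_symm_one (M : Matrix V V (ZMod 2)) (hsym : M.IsSymm) {a : V}
    (hMaa : M a a = 0) (A B d : K) :
    ∑ g, gBracketTerm M A B d ((Equiv.funSplitAt a (ZMod 2)).symm (1, g))
      = B * gBracket (of fun x y : {z // z ≠ a} => M x.1 y.1 + M x.1 a * M y.1 a) A B d := by
  rw [gBracket_eq_sum_gBracketTerm, Finset.mul_sum]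
  refine Fintype.sum_congr _ _ fun g => ?_
  rw [gBracketTerm_localComplement M hsym hMaa A B d _ (by simp)]
  congr
  funext x
  simp [x.2]

theorem sum_gBracketTerm_funSplitAt_symm_zero (M : Matrix V V (ZMod 2)) (hsym : M.IsSymm)
    {a b : V} (hab : a ≠ b) (hMab : M a b = 1) (hMaa : M a a = 0) (hMbb : M b b = 0)
    (A B d : K) :
    ∑ g, gBracketTerm M A B d ((Equiv.funSplitAt a (ZMod 2)).symm (0, g))
      = A ^ 2 * gBracket (of fun x y : {z // z ≠ a ∧ z ≠ b} =>
          M x.1 y.1 + M x.1 a * M y.1 b + M x.1 b * M y.1 a) A B d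
        + A * B * gBracket (of fun x y : {z // z ≠ a ∧ z ≠ b} =>
          M x.1 y.1 + M x.1 a * M y.1 b + M x.1 b * M y.1 a + M x.1 a * M y.1 a) A B d := by
  rw [Fintype.sum_eq_sum_sum_funSplitAt (⟨b, hab.symm⟩ : {z // z ≠ a}), ZMod.sum_univ_two,
    gBracket_eq_sum_gBracketTerm, gBracket_eq_sum_gBracketTerm, Finset.mul_sum, Finset.mul_sum,
    ← Fintype.sum_comp_subtype_ne_ne hab, ← Fintype.sum_comp_subtype_ne_ne hab]
  congr 1 <;> refine Fintype.sum_congr _ _ fun h => ?_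
  · rw [gBracketTerm_pivot M hsym hab hMab hMaa hMbb A B d _ (by simp) (by simp [hab.symm])]
    congr
    funext x
    simp [x.2.1, x.2.2]
  · rw [gBracketTerm_pivot_localComplement M hsym hab hMab hMaa hMbb A B d _ (by simp)
      (by simp [hab.symm])]
    congr
    funext x
    simp [x.2.1, x.2.2]

end GraphBracket

theorem graphBracket_pivot_reduction_general {K : Type*} [CommRing K] (A B d : K)
    (n : ℕ) (M : Matrix (Fin n) (Fin n) (ZMod 2)) (hsym : M.IsSymm)
    (a b : Fin n) (hab : a ≠ b) (hMab : M a b = 1) (hMaa : M a a = 0) (hMbb : M b b = 0) :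
    gBracket M A B d =
      A ^ 2 *
        gBracket (Matrix.of fun x y : {z : Fin n // z ≠ a ∧ z ≠ b} =>
          M x.1 y.1 + M x.1 a * M y.1 b + M x.1 b * M y.1 a) A B d
      + A * B *
        gBracket (Matrix.of fun x y : {z : Fin n // z ≠ a ∧ z ≠ b} =>
          M x.1 y.1 + M x.1 a * M y.1 b + M x.1 b * M y.1 a + M x.1 a * M y.1 a) A B d
      + B *
        gBracket (Matrix.of fun x y : {z : Fin n // z ≠ a} =>
          M x.1 y.1 + M x.1 a * M y.1 a) A B d := by
  rw [gBracket_eq_sum_gBracketTerm, Fintype.sum_eq_sum_sum_funSplitAt a, ZMod.sum_univ_two,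
    sum_gBracketTerm_funSplitAt_symm_zero M hsym hab hMab hMaa hMbb,
    sum_gBracketTerm_funSplitAt_symm_one M hsym hMaa]

/-- Theorem 1(ii): pivot reduction formula for the graph bracket.
If `a ≠ b` are adjacent unlooped vertices then
`[G] = A²[G^{ab}-a-b] + AB[(G^{ab})ᵃ-a-b] + B[Gᵃ-a]`. -/
theorem graphBracket_pivot_reduction {K : Type*} [CommRing K] (A B d : K)
    (n : ℕ) (hn : 2 ≤ n) (M : Matrix (Fin n) (Fin n) (ZMod 2)) (hsym : M.IsSymm)
    (a b : Fin n) (hab : a ≠ b) (hMab : M a b = 1) (hMaa : M a a = 0) (hMbb : M b b = 0) :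
    gBracket M A B d =
      A ^ 2 *
        gBracket (Matrix.of fun x y : {z : Fin n // z ≠ a ∧ z ≠ b} =>
          M x.1 y.1 + M x.1 a * M y.1 b + M x.1 b * M y.1 a) A B d
      + A * B *
        gBracket (Matrix.of fun x y : {z : Fin n // z ≠ a ∧ z ≠ b} =>
          M x.1 y.1 + M x.1 a * M y.1 b + M x.1 b * M y.1 a + M x.1 a * M y.1 a) A B d
      + B *
        gBracket (Matrix.of fun x y : {z : Fin n // z ≠ a} =>
          M x.1 y.1 + M x.1 a * M y.1 a) A B d :=
  graphBracket_pivot_reduction_general A B d n M hsym a b hab hMab hMaa hMbb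
end

section
/- Let K be a commutative ring and A, B, d ∈ K. Let G be a looped graph with Boolean adjacency matrix M and let G+I be the looped graph with Boolean adjacency matrix M+I, obtained by toggling the loop at every vertex of G (G+I has a loop at a vertex precisely when G does not). Then [G+I](A,B,d) = [G](B,A,d). -/
open Matrix BigOperators

/- Over `GF(2)` adding `I` to a diagonal matrix swaps its zero and nonzero diagonal entries,
so `Δ ↦ Δ + I` exchanges `ρ(Δ)` and `ν(Δ)` while `(M + I) + (Δ + I) = M + Δ`. Reindexing the
sum for `[G + I]` by this involution therefore turns it term by term into the sum for `[G]`
with `A` and `B` swapped. -/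

namespace Matrix

theorem add_one_add_diagonal_add_one {V R : Type*} [DecidableEq V] [Ring R] [CharP R 2]
    (M : Matrix V V R) (f : V → R) :
    M + 1 + diagonal (f + 1) = M + diagonal f := by
  rw [← diagonal_one, add_assoc, diagonal_add]
  simp only [Pi.add_apply, Pi.one_apply, add_comm (f _), CharTwo.add_cancel_left]

variable {V : Type*} [Fintype V] [DecidableEq V]

theorem rank_diagonal_add_one (f : V → ZMod 2) :
    (diagonal (f + 1)).rank = Fintype.card V - (diagonal f).rank := by
  have toggled_ne_zero (i : V) : (f + 1) i ≠ 0 ↔ ¬ f i ≠ 0 := by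
    simp only [Pi.add_apply, Pi.one_apply, not_not]
    generalize f i = x
    revert x
    decide
  rw [rank_diagonal, rank_diagonal, ← Fintype.card_subtype_compl,
    Fintype.card_congr (Equiv.subtypeEquivRight toggled_ne_zero)]

theorem rank_diagonal_le_card {R : Type*} [CommRing R] [StrongRankCondition R] (f : V → R) :
    (diagonal f).rank ≤ Fintype.card V := by
  simpa using rank_le_card_width (diagonal f)

end Matrix

theorem graphBracket_loop_toggle_general {K : Type*} [CommRing K] (A B d : K)
    {n : ℕ} (M : Matrix (Fin n) (Fin n) (ZMod 2)) :
    gBracket (M + 1) A B d = gBracket M B A d := by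
  unfold gBracket
  rw [← Equiv.sum_comp (Equiv.addRight (1 : Fin n → ZMod 2))]
  refine Finset.sum_congr rfl fun f _ => ?_
  rw [Equiv.coe_addRight, add_one_add_diagonal_add_one, rank_diagonal_add_one,
    Nat.sub_sub_self (rank_diagonal_le_card f)]
  ring

/-- Proposition 2: toggling all loops swaps the roles of `A` and `B`:
`[G + I](A,B,d) = [G](B,A,d)`. -/
theorem graphBracket_loop_toggle {K : Type*} [CommRing K] (A B d : K)
    {n : ℕ} (M : Matrix (Fin n) (Fin n) (ZMod 2)) (hsym : M.IsSymm) :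
    gBracket (M + 1) A B d = gBracket M B A d :=
  graphBracket_loop_toggle_general A B d M
end

section
/- Let G be a looped graph on n vertices with exactly ℓ loops (ℓ is the number of indices i with M_{ii} = 1). Then the real function A ↦ ⟨G⟩(A), defined for nonzero real A, is differentiable at A = 1 with derivative (−1)^n·(3n − 6ℓ). (This is the identity underlying V_G′(1) = 0 and the formula ℓ = n/2 − ((−1)^n/6)·(d⟨G⟩/dA)(1), showing that the graph bracket determines the number of loops.) -/
open Matrix BigOperators

/-- The reduced graph bracket `⟨G⟩(A) = [G](A, A⁻¹, -A² - A⁻²)`. -/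
noncomputable def gBracketR {V : Type*} [Fintype V] [DecidableEq V]
    (M : Matrix V V (ZMod 2)) (A : ℝ) : ℝ :=
  gBracket M A A⁻¹ (-A ^ 2 - A⁻¹ ^ 2)

/-!
Differentiating termwise at `A = 1`, the summand of `Δ` contributes
`(ν(Δ) - ρ(Δ)) (-2)^ν(M+Δ) = ∑ᵢ (-1)^Δᵢᵢ (-2)^ν(M+Δ)`, so it suffices that for every vertex `i`
`∑_Δ (-1)^Δᵢᵢ (-2)^ν(M+Δ) = 3 (-1)^n (-1)^Mᵢᵢ`.

The engine is a one-vertex reduction: if `N` is symmetric over `GF(2)` and its `(j, j)` entry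
runs over both values, the two terms `(-2)^ν(N)` add up to `-(-2)^ν(N - j)`, where `N - j` deletes
row and column `j`. Writing `N` as the bordered matrix `[[N₁, w], [wᵀ, ε]]`, this holds because
either `w = N₁ u`, and then `ν(N)` is `ν(N₁) + 1` for `ε = uᵀw` and `ν(N₁)` for the other value,
or `w ∉ range N₁ = (ker N₁)^⊥`, and then `ν(N) = ν(N₁) - 1` for both values.
Summing out every vertex except `i` in this way leaves the `1 × 1` matrix `Mᵢᵢ + Δᵢᵢ`.
-/

namespace GraphBracket

section Nullity

variable {K ι κ : Type*} [Field K] [Fintype ι] [Fintype κ]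

noncomputable def nullity (N : Matrix ι ι K) : ℕ :=
  Module.finrank K (LinearMap.ker N.mulVecLin)

lemma rank_add_nullity (N : Matrix ι ι K) : N.rank + nullity N = Fintype.card ι := by
  simpa [Matrix.rank, nullity] using LinearMap.finrank_range_add_finrank_ker N.mulVecLin

lemma card_sub_rank_eq_nullity (N : Matrix ι ι K) : Fintype.card ι - N.rank = nullity N := by
  have := rank_add_nullity N
  omega

lemma nullity_submatrix_equiv (N : Matrix ι ι K) (e : κ ≃ ι) :
    nullity (N.submatrix e e) = nullity N := by
  rw [← card_sub_rank_eq_nullity, ← card_sub_rank_eq_nullity, rank_submatrix, Fintype.card_congr e]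

lemma natCard_ker [Finite K] (N : Matrix ι ι K) :
    Nat.card {x // N *ᵥ x = 0} = Nat.card K ^ nullity N := by
  have : Fintype K := Fintype.ofFinite K
  classical
  rw [Nat.card_eq_fintype_card (α := K), nullity,
    ← Module.card_eq_pow_finrank (K := K) (V := LinearMap.ker N.mulVecLin),
    ← Nat.card_eq_fintype_card]
  exact Nat.card_congr (Equiv.subtypeEquivRight fun x => by simp [LinearMap.mem_ker])

lemma _root_.Matrix.IsSymm.mulVec_dotProduct {N : Matrix ι ι K} (hN : N.IsSymm) (x y : ι → K) :
    (N *ᵥ x) ⬝ᵥ y = x ⬝ᵥ (N *ᵥ y) := by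
  rw [dotProduct_comm, dotProduct_mulVec, ← mulVec_transpose, hN.eq, dotProduct_comm]

lemma mulVec_dotProduct_eq_zero {N : Matrix ι ι K} (hN : N.IsSymm) {k : ι → K}
    (hk : N *ᵥ k = 0) (u : ι → K) : (N *ᵥ u) ⬝ᵥ k = 0 := by
  rw [hN.mulVec_dotProduct, hk, dotProduct_zero]

lemma exists_mulVec_eq_of_isSymm [DecidableEq ι] {N : Matrix ι ι K} (hN : N.IsSymm) {w : ι → K}
    (hw : ∀ k, N *ᵥ k = 0 → w ⬝ᵥ k = 0) : ∃ u, N *ᵥ u = w := by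
  set β := Matrix.toBilin' (1 : Matrix ι ι K)
  have hβ : β.Nondegenerate :=
    LinearMap.BilinForm.nondegenerate_toBilin'_of_det_ne_zero' _ (by simp)
  have hβ_apply (x y : ι → K) : β x y = x ⬝ᵥ y := by simp [β, Matrix.toBilin'_apply']
  have hle : LinearMap.range N.mulVecLin ≤ β.orthogonal (LinearMap.ker N.mulVecLin) := by
    rintro _ ⟨u, rfl⟩ k hk
    rw [hβ_apply, dotProduct_comm]
    exact mulVec_dotProduct_eq_zero hN hk u
  have heq : LinearMap.range N.mulVecLin = β.orthogonal (LinearMap.ker N.mulVecLin) := by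
    refine Submodule.eq_of_le_of_finrank_le hle ?_
    have := LinearMap.finrank_range_add_finrank_ker N.mulVecLin
    rw [LinearMap.BilinForm.finrank_orthogonal hβ]
    omega
  have hwW : w ∈ β.orthogonal (LinearMap.ker N.mulVecLin) := fun k hk => by
    rw [hβ_apply, dotProduct_comm]
    exact hw k hk
  rw [← heq] at hwW
  exact hwW

lemma nullity_fin_one [DecidableEq K] (N : Matrix (Fin 1) (Fin 1) K) :
    nullity N = if N 0 0 = 0 then 1 else 0 := by
  rw [← card_sub_rank_eq_nullity, Fintype.card_fin]
  split_ifs with h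
  · rw [show N = 0 from ext fun i j => by fin_cases i; fin_cases j; exact h, rank_zero]
  · rw [rank_of_isUnit N ((isUnit_iff_isUnit_det N).mpr (by simpa using h)), Fintype.card_fin]

end Nullity

local notation "𝔽₂" => ZMod 2

lemma vec_add_eq_zero_iff {ι : Type*} {x y : ι → 𝔽₂} : x + y = 0 ↔ x = y := by
  rw [add_eq_zero_iff_eq_neg, show -y = y from funext fun _ => ZMod.neg_eq_self_mod_two _]

lemma sum_zmod_two {M : Type*} [AddCommMonoid M] (g : 𝔽₂ → M) : ∑ t, g t = g 0 + g 1 :=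
  Fin.sum_univ_two g

section BorderedKernel

variable {ι : Type*} [Fintype ι] {N : Matrix ι ι 𝔽₂} {w : ι → 𝔽₂}

/-- The kernel of the bordered symmetric matrix `[[N, w], [wᵀ, ε]]`. -/
def borderedKer (N : Matrix ι ι 𝔽₂) (w : ι → 𝔽₂) (ε : 𝔽₂) : Set ((ι → 𝔽₂) × 𝔽₂) :=
  {p | N *ᵥ p.1 + p.2 • w = 0 ∧ w ⬝ᵥ p.1 + ε * p.2 = 0}

lemma dotProduct_eq_of_mem_borderedKer (hN : N.IsSymm) {u : ι → 𝔽₂} (hu : N *ᵥ u = w)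
    {ε : 𝔽₂} {p : (ι → 𝔽₂) × 𝔽₂} (hp : p ∈ borderedKer N w ε) :
    w ⬝ᵥ p.1 = p.2 * (u ⬝ᵥ w) := by
  calc w ⬝ᵥ p.1 = u ⬝ᵥ (N *ᵥ p.1) := by rw [← hu, hN.mulVec_dotProduct]
    _ = p.2 * (u ⬝ᵥ w) := by rw [vec_add_eq_zero_iff.mp hp.1, dotProduct_smul, smul_eq_mul]

def borderedKerEquivOfMulVecEq (hN : N.IsSymm) {u : ι → 𝔽₂} (hu : N *ᵥ u = w) (ε : 𝔽₂) :
    borderedKer N w ε ≃ {k // N *ᵥ k = 0} × {t : 𝔽₂ // (u ⬝ᵥ w + ε) * t = 0} where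
  toFun p := (⟨p.1.1 + p.1.2 • u, by
      rw [mulVec_add, mulVec_smul, hu]; exact p.2.1⟩, ⟨p.1.2, by
      linear_combination p.2.2 - dotProduct_eq_of_mem_borderedKer hN hu p.2⟩)
  invFun q := ⟨(q.1.1 + q.2.1 • u, q.2.1), by
      refine ⟨?_, ?_⟩
      · rw [mulVec_add, mulVec_smul, hu, q.1.2, zero_add, vec_add_eq_zero_iff]
      · have hwk := mulVec_dotProduct_eq_zero hN q.1.2 u
        rw [hu] at hwk
        rw [dotProduct_add, dotProduct_smul, smul_eq_mul]
        linear_combination hwk + q.2.2 + (q.2 : 𝔽₂) * dotProduct_comm w u⟩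
  left_inv p := by
    ext1
    simp only [add_assoc, vec_add_eq_zero_iff.mpr rfl, add_zero]
  right_inv q := by
    ext1
    · ext1; simp only [add_assoc, vec_add_eq_zero_iff.mpr rfl, add_zero]
    · rfl

lemma natCard_borderedKer_of_mulVec_eq (hN : N.IsSymm) {u : ι → 𝔽₂} (hu : N *ᵥ u = w)
    (ε : 𝔽₂) :
    Nat.card (borderedKer N w ε) = 2 ^ (nullity N + if u ⬝ᵥ w + ε = 0 then 1 else 0) := by
  rw [Nat.card_congr (borderedKerEquivOfMulVecEq hN hu ε), Nat.card_prod, natCard_ker,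
    Nat.card_zmod, pow_add]
  congr 1
  generalize u ⬝ᵥ w + ε = c
  fin_cases c <;> rw [Nat.card_eq_fintype_card] <;> decide

lemma snd_eq_zero_of_mem_borderedKer (hw : ¬∃ u, N *ᵥ u = w) {ε : 𝔽₂}
    {p : (ι → 𝔽₂) × 𝔽₂} (hp : p ∈ borderedKer N w ε) : p.2 = 0 := by
  obtain ⟨y, t⟩ := p
  fin_cases t
  · rfl
  · have hy : N *ᵥ y + (1 : 𝔽₂) • w = 0 := hp.1
    rw [one_smul, vec_add_eq_zero_iff] at hy
    exact absurd ⟨y, hy⟩ hw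

def borderedKerEquivOfNotExists (hw : ¬∃ u, N *ᵥ u = w) (ε : 𝔽₂) :
    borderedKer N w ε ≃ {k // N *ᵥ k = 0 ∧ w ⬝ᵥ k = 0} where
  toFun p :=
    have h0 := snd_eq_zero_of_mem_borderedKer hw p.2
    ⟨p.1.1, by simpa [h0] using p.2.1, by simpa [h0] using p.2.2⟩
  invFun k := ⟨(k.1, 0), by simpa using k.2.1, by simpa using k.2.2⟩
  left_inv p := Subtype.ext (Prod.ext rfl (snd_eq_zero_of_mem_borderedKer hw p.2).symm)
  right_inv _ := rfl

def kerEquivProdOfDotProductEqOne {k₀ : ι → 𝔽₂} (hk₀ : N *ᵥ k₀ = 0) (hwk₀ : w ⬝ᵥ k₀ = 1) :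
    {k // N *ᵥ k = 0} ≃ {k // N *ᵥ k = 0 ∧ w ⬝ᵥ k = 0} × 𝔽₂ where
  toFun k := (⟨k.1 + (w ⬝ᵥ k.1) • k₀,
      by rw [mulVec_add, mulVec_smul, k.2, hk₀, smul_zero, add_zero],
      by rw [dotProduct_add, dotProduct_smul, hwk₀, smul_eq_mul, mul_one,
        CharTwo.add_self_eq_zero]⟩, w ⬝ᵥ k.1)
  invFun q := ⟨q.1.1 + q.2 • k₀,
    by rw [mulVec_add, mulVec_smul, q.1.2.1, hk₀, smul_zero, add_zero]⟩
  left_inv k := Subtype.ext (by simp only [add_assoc, vec_add_eq_zero_iff.mpr rfl, add_zero])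
  right_inv q := by
    have hq : w ⬝ᵥ (q.1.1 + q.2 • k₀) = q.2 := by
      rw [dotProduct_add, q.1.2.2, dotProduct_smul, hwk₀, smul_eq_mul, mul_one, zero_add]
    ext1
    · ext1; simp only [hq, add_assoc, vec_add_eq_zero_iff.mpr rfl, add_zero]
    · exact hq

lemma natCard_borderedKer_of_not_exists [DecidableEq ι] (hN : N.IsSymm)
    (hw : ¬∃ u, N *ᵥ u = w) (ε : 𝔽₂) :
    Nat.card (borderedKer N w ε) * 2 = 2 ^ nullity N := by
  obtain ⟨k₀, hk₀, hwk₀⟩ : ∃ k₀, N *ᵥ k₀ = 0 ∧ w ⬝ᵥ k₀ = 1 := by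
    by_contra! h
    refine hw (exists_mulVec_eq_of_isSymm hN fun k hk => ?_)
    have := h k hk
    generalize w ⬝ᵥ k = c at this ⊢
    fin_cases c
    · rfl
    · exact absurd rfl this
  have := Nat.card_congr (kerEquivProdOfDotProductEqOne hk₀ hwk₀)
  rw [natCard_ker, Nat.card_prod, Nat.card_zmod] at this
  rw [Nat.card_congr (borderedKerEquivOfNotExists hw ε), this]

lemma sum_neg_two_pow_of_natCard_borderedKer [DecidableEq ι] (hN : N.IsSymm) (c : 𝔽₂)
    {ν : 𝔽₂ → ℕ} (hν : ∀ t, Nat.card (borderedKer N w (c + t)) = 2 ^ ν t) :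
    ∑ t, (-2 : ℝ) ^ ν t = -(-2) ^ nullity N := by
  have hinj := Nat.pow_right_injective (le_refl 2)
  rw [sum_zmod_two]
  by_cases hw : ∃ u, N *ᵥ u = w
  · obtain ⟨u, hu⟩ := hw
    have hν' t : ν t = nullity N + if u ⬝ᵥ w + c + t = 0 then 1 else 0 := by
      rw [add_assoc]
      exact hinj ((hν t).symm.trans (natCard_borderedKer_of_mulVec_eq hN hu _))
    rw [hν' 0, hν' 1]
    generalize u ⬝ᵥ w + c = a
    fin_cases a <;> simp +decide [pow_succ] <;> ring
  · have hν' t : nullity N = ν t + 1 :=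
      hinj (by simp only [← natCard_borderedKer_of_not_exists hN hw (c + t), hν t, pow_succ])
    have h0 := hν' 0
    have h1 := hν' 1
    rw [show ν 1 = ν 0 by omega, h0, pow_succ]
    ring

end BorderedKernel

section DeleteVertex

variable {m : ℕ} {B : Matrix (Fin (m + 1)) (Fin (m + 1)) 𝔽₂}

lemma mulVec_insertNth_eq_zero_iff (hB : B.IsSymm) (i : Fin (m + 1)) (t : 𝔽₂)
    (y : Fin m → 𝔽₂) :
    B *ᵥ i.insertNth t y = 0 ↔
      (y, t) ∈ borderedKer (B.submatrix i.succAbove i.succAbove)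
        (fun j => B (i.succAbove j) i) (B i i) := by
  have hi : (B *ᵥ i.insertNth t y) i = (fun j => B (i.succAbove j) i) ⬝ᵥ y + B i i * t := by
    simp only [mulVec, dotProduct, Fin.sum_univ_succAbove _ i, Fin.insertNth_apply_same,
      Fin.insertNth_apply_succAbove, hB.apply i]
    ring
  have hj (j : Fin m) : (B *ᵥ i.insertNth t y) (i.succAbove j) =
      (B.submatrix i.succAbove i.succAbove *ᵥ y + t • fun j => B (i.succAbove j) i) j := by
    simp only [mulVec, dotProduct, Fin.sum_univ_succAbove _ i, Fin.insertNth_apply_same,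
      Fin.insertNth_apply_succAbove, submatrix_apply, Pi.add_apply, Pi.smul_apply, smul_eq_mul]
    ring
  rw [funext_iff, Fin.forall_iff_succAbove i, and_comm]
  simp only [hi, hj, Pi.zero_apply]
  exact and_congr_left' funext_iff.symm

lemma natCard_ker_eq_natCard_borderedKer (hB : B.IsSymm) (i : Fin (m + 1)) :
    Nat.card {x // B *ᵥ x = 0} = Nat.card (borderedKer (B.submatrix i.succAbove i.succAbove)
      (fun j => B (i.succAbove j) i) (B i i)) :=
  Nat.card_congr (Equiv.subtypeEquiv ((Equiv.prodComm _ _).trans (Fin.insertNthEquiv _ i))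
    fun p => (mulVec_insertNth_eq_zero_iff hB i p.2 p.1).symm).symm

lemma sum_neg_two_pow_nullity_add_single (hB : B.IsSymm) (i : Fin (m + 1)) :
    ∑ t, (-2 : ℝ) ^ nullity (B + diagonal (Pi.single i t)) =
      -(-2) ^ nullity (B.submatrix i.succAbove i.succAbove) := by
  refine sum_neg_two_pow_of_natCard_borderedKer (w := fun j => B (i.succAbove j) i)
    (hB.submatrix _) (B i i) fun t => ?_
  have hBt : (B + diagonal (Pi.single i t)).IsSymm := hB.add (isSymm_diagonal _)
  have hsub : (B + diagonal (Pi.single i t)).submatrix i.succAbove i.succAbove =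
      B.submatrix i.succAbove i.succAbove := by
    ext j k
    simp [diagonal_apply, Fin.succAbove_ne]
  have hborder : (fun j => (B + diagonal (Pi.single i t)) (i.succAbove j) i) =
      fun j => B (i.succAbove j) i := by
    ext j
    simp
  have h := natCard_ker (B + diagonal (Pi.single i t))
  rw [Nat.card_zmod, natCard_ker_eq_natCard_borderedKer hBt i, hsub, hborder] at h
  simpa using h

end DeleteVertex

lemma snoc_eq_snoc_zero_add_single {M : Type*} [AddMonoid M] {m : ℕ} (g : Fin m → M) (t : M) :
    (Fin.snoc g t : Fin (m + 1) → M) = Fin.snoc g 0 + Pi.single (Fin.last m) t := by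
  ext j
  induction j using Fin.lastCases with
  | last => simp
  | cast j => simp [Fin.castSucc_ne_last]

lemma sum_neg_two_pow_nullity_cons {m : ℕ} (B : Matrix (Fin (m + 1)) (Fin (m + 1)) 𝔽₂)
    (hB : B.IsSymm) (c : 𝔽₂) :
    ∑ g : Fin m → 𝔽₂, (-2 : ℝ) ^ nullity (B + diagonal (Fin.cons c g)) =
      (-1) ^ m * if B 0 0 + c = 0 then -2 else 1 := by
  induction m with
  | zero =>
    rw [Fintype.sum_unique, nullity_fin_one]
    split_ifs <;> simp_all
  | succ m ih =>
    have hstep (h : Fin m → 𝔽₂) :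
        ∑ t, (-2 : ℝ) ^ nullity (B + diagonal (Fin.cons c (Fin.snoc h t))) =
          -(-2) ^ nullity (B.submatrix Fin.castSucc Fin.castSucc + diagonal (Fin.cons c h)) := by
      have hsub : (B + diagonal (Fin.snoc (Fin.cons c h) 0)).submatrix
          (Fin.last _).succAbove (Fin.last _).succAbove =
            B.submatrix Fin.castSucc Fin.castSucc + diagonal (Fin.cons c h) := by
        ext j k
        simp [Fin.succAbove_last, diagonal_apply]
      have hsplit (t : 𝔽₂) : B + diagonal (Fin.cons c (Fin.snoc h t)) =
          B + diagonal (Fin.snoc (Fin.cons c h) 0) + diagonal (Pi.single (Fin.last _) t) := by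
        rw [Fin.cons_snoc_eq_snoc_cons, snoc_eq_snoc_zero_add_single, add_assoc B, diagonal_add]
        rfl
      simp only [hsplit]
      rw [sum_neg_two_pow_nullity_add_single (hB.add (isSymm_diagonal _)), hsub]
    rw [← (Fin.snocEquiv fun _ => 𝔽₂).sum_comp, Fintype.sum_prod_type_right]
    refine (Finset.sum_congr rfl fun h _ => hstep h).trans ?_
    rw [Finset.sum_neg_distrib, ih _ (hB.submatrix _), pow_succ]
    rw [show B.submatrix Fin.castSucc Fin.castSucc 0 0 = B 0 0 from rfl]
    ring

lemma sum_sign_mul_neg_two_pow_nullity_zero {m : ℕ} (B : Matrix (Fin (m + 1)) (Fin (m + 1)) 𝔽₂)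
    (hB : B.IsSymm) :
    ∑ g : Fin (m + 1) → 𝔽₂, (-1 : ℝ) ^ (g 0).val * (-2) ^ nullity (B + diagonal g) =
      3 * (-1) ^ (m + 1) * (-1) ^ (B 0 0).val := by
  rw [← (Fin.consEquiv fun _ => 𝔽₂).sum_comp, Fintype.sum_prod_type]
  simp only [Fin.consEquiv, Equiv.coe_fn_mk, Fin.cons_zero, ← Finset.mul_sum,
    sum_neg_two_pow_nullity_cons B hB, sum_zmod_two]
  generalize B 0 0 = a
  fin_cases a <;> simp +decide [pow_succ] <;> ring

lemma sum_sign_mul_neg_two_pow_nullity {n : ℕ} (M : Matrix (Fin n) (Fin n) 𝔽₂) (hM : M.IsSymm)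
    (i : Fin n) :
    ∑ f : Fin n → 𝔽₂, (-1 : ℝ) ^ (f i).val * (-2) ^ nullity (M + diagonal f) =
      3 * (-1) ^ n * (-1) ^ (M i i).val := by
  obtain ⟨m, rfl⟩ := Nat.exists_eq_add_one_of_ne_zero i.pos.ne'
  set σ := Equiv.swap 0 i
  have hσ (g : Fin (m + 1) → 𝔽₂) : (M.submatrix σ σ + diagonal g).submatrix σ σ =
      M + diagonal (g ∘ σ) := by
    ext a b
    simp [σ, diagonal_apply]
  rw [← (σ.symm.arrowCongr (Equiv.refl 𝔽₂)).sum_comp]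
  have hi : σ i = 0 := Equiv.swap_apply_right 0 i
  simp only [Equiv.arrowCongr, Equiv.coe_fn_mk, Equiv.symm_symm, Equiv.coe_refl, Function.id_comp,
    Function.comp_apply, hi, ← hσ, nullity_submatrix_equiv]
  rw [sum_sign_mul_neg_two_pow_nullity_zero _ (hM.submatrix σ)]
  simp [σ]

lemma card_sub_two_mul_card_eq_sum_neg_one_pow {ι : Type*} [Fintype ι] (f : ι → 𝔽₂) :
    (Fintype.card ι : ℝ) - 2 * Fintype.card {i // f i = 1} = ∑ i, (-1 : ℝ) ^ (f i).val := by
  have hsign (a : 𝔽₂) : (-1 : ℝ) ^ a.val = 1 - 2 * if a = 1 then 1 else 0 := by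
    obtain rfl | rfl : a = 0 ∨ a = 1 := by revert a; decide
    · simp
    · norm_num [ZMod.val_one]
  simp only [hsign, Finset.sum_sub_distrib, ← Finset.mul_sum, Finset.sum_boole,
    Fintype.card_subtype, Finset.sum_const, Finset.card_univ, nsmul_eq_mul, mul_one]

lemma sum_card_mul_neg_two_pow_nullity {n : ℕ} (M : Matrix (Fin n) (Fin n) 𝔽₂) (hM : M.IsSymm) :
    ∑ f : Fin n → 𝔽₂,
        ((n : ℝ) - 2 * Fintype.card {i // f i = 1}) * (-2) ^ nullity (M + diagonal f) =
      (-1) ^ n * (3 * n - 6 * Fintype.card {i // M i i = 1}) := by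
  have hcoef (f : Fin n → 𝔽₂) := card_sub_two_mul_card_eq_sum_neg_one_pow f
  simp only [Fintype.card_fin] at hcoef
  simp only [hcoef, Finset.sum_mul]
  rw [Finset.sum_comm]
  simp only [sum_sign_mul_neg_two_pow_nullity M hM, ← Finset.mul_sum, ← hcoef]
  ring

lemma hasDerivAt_pow_mul_inv_pow_mul_at_one (a b c : ℕ) :
    HasDerivAt (fun A : ℝ => A ^ a * A⁻¹ ^ b * (-A ^ 2 - A⁻¹ ^ 2) ^ c)
      ((a - b) * (-2) ^ c) 1 := by
  have hinv : HasDerivAt (fun A : ℝ => A⁻¹) (-1) 1 := by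
    simpa using hasDerivAt_inv (one_ne_zero (α := ℝ))
  have h := (((hasDerivAt_pow a 1).mul (hinv.pow b)).mul
    (((hasDerivAt_pow 2 1).neg.sub (hinv.pow 2)).pow c))
  refine h.congr_deriv ?_
  norm_num
  ring

lemma rank_diagonal_zmod_two {ι : Type*} [Fintype ι] [DecidableEq ι] (f : ι → 𝔽₂) :
    (diagonal f).rank = Fintype.card {i // f i = 1} := by
  rw [rank_diagonal]
  exact Fintype.card_congr <| Equiv.subtypeEquivRight fun i => by
    generalize f i = a
    revert a
    decide

lemma hasDerivAt_gBracketR_one {V : Type*} [Fintype V] [DecidableEq V] (M : Matrix V V 𝔽₂) :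
    HasDerivAt (gBracketR M)
      (∑ f : V → 𝔽₂, ((Fintype.card V : ℝ) - 2 * Fintype.card {i // f i = 1}) *
        (-2) ^ nullity (M + diagonal f)) 1 := by
  refine (HasDerivAt.fun_sum (u := Finset.univ) fun f _ =>
    hasDerivAt_pow_mul_inv_pow_mul_at_one _ _ _).congr_deriv (Finset.sum_congr rfl fun f _ => ?_)
  rw [rank_diagonal_zmod_two, Nat.cast_sub (Fintype.card_subtype_le _), card_sub_rank_eq_nullity]
  ring

end GraphBracket

/-- Proposition 4: `A ↦ ⟨G⟩(A)` has derivative `(-1)^n (3n - 6ℓ)` at `A = 1`,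
where `n` is the number of vertices and `ℓ` the number of loops of `G`.
(This underlies `V_G'(1) = 0` and shows the bracket determines `ℓ`.) -/
theorem reducedBracket_deriv_at_one {n : ℕ} (M : Matrix (Fin n) (Fin n) (ZMod 2))
    (hsym : M.IsSymm) :
    HasDerivAt (fun A : ℝ => gBracketR M A)
      ((-1 : ℝ) ^ n * (3 * (n : ℝ) - 6 * (Fintype.card {i : Fin n // M i i = 1} : ℝ)))
      1 := by
  have h := GraphBracket.hasDerivAt_gBracketR_one M
  rwa [Fintype.card_fin, GraphBracket.sum_card_mul_neg_two_pow_nullity M hsym] at h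
end

section
/- Let K be a commutative ring and A, B, d ∈ K. Let K_n denote the complete simple looped graph on n vertices (no loops; every two distinct vertices adjacent, so its Boolean adjacency matrix has (i,j) entry 1 for i ≠ j and 0 on the diagonal). Then d·[K_n](A,B,d) = (A+Bd)^n − A^n + A^n·d² if n is odd, and d·[K_n](A,B,d) = (A+Bd)^n − A^n + A^n·d if n is even. -/
open Matrix BigOperators

/-- The complete (simple, loopless) graph on `n` vertices. -/
def completeM (n : ℕ) : Matrix (Fin n) (Fin n) (ZMod 2) :=
  Matrix.of fun i j => if i = j then 0 else 1

/-!
Over `GF(2)` the adjacency matrix of `K_n` is `J + I`, with `J` the all-ones matrix. For a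
nonzero loop pattern `f`, a vector `v` lies in the kernel of `J + I + diag f` iff it has zero
sum and vanishes off the looped vertices, so `ν(K_n + diag f) = ρ(diag f) - 1`. Multiplying by
`d` therefore turns the `f ≠ 0` terms of `[K_n]` into the terms `A^{n-|f|} (Bd)^{|f|}` of the
expansion of `(A + Bd)^n` over subsets. The remaining term `f = 0` is `A^n d^{ν(J + I)}`, and
`J + I` has kernel spanned by the all-ones vector when `n` is odd and is invertible when `n`
is even.
-/

open Finset Module

theorem Matrix.card_sub_rank_eq_finrank_ker {m V F : Type*} [Fintype V] [Field F]
    (M : Matrix m V F) : Fintype.card V - M.rank = finrank F (LinearMap.ker M.mulVecLin) := by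
  have := M.mulVecLin.finrank_range_add_finrank_ker
  rw [finrank_fintype_fun_eq_card] at this
  rw [Matrix.rank]
  omega

theorem Fintype.sum_pow_mul_pow_rank_diagonal {V R : Type*} [Fintype V] [DecidableEq V]
    [CommSemiring R] (a b : R) :
    ∑ f : V → ZMod 2, a ^ (card V - (diagonal f).rank) * b ^ (diagonal f).rank
      = (a + b) ^ card V := by
  have hrank (f : V → ZMod 2) : (diagonal f).rank = #{i | f i ≠ 0} := by
    rw [rank_diagonal, card_subtype]
  have hcompl (f : V → ZMod 2) : card V - #{i | f i ≠ 0} = #{i | f i = 0} := by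
    have := card_filter_add_card_filter_not (s := univ) (fun i => f i = 0)
    simp only [card_univ, ne_eq] at this ⊢
    omega
  have hsum_two : ∑ x : ZMod 2, (if x = 0 then a else b) = a + b := Fin.sum_univ_two _
  calc ∑ f : V → ZMod 2, a ^ (card V - (diagonal f).rank) * b ^ (diagonal f).rank
      = ∑ f : V → ZMod 2, ∏ i, if f i = 0 then a else b := by
        refine Fintype.sum_congr _ _ fun f => ?_
        rw [prod_ite, prod_const, prod_const, hrank, hcompl]
    _ = ∏ _i : V, ∑ x : ZMod 2, if x = 0 then a else b :=
        (Fintype.prod_sum fun _ x => if x = 0 then a else b).symm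
    _ = (a + b) ^ card V := by rw [hsum_two, prod_const, card_univ]

section SumRestrict

variable {F V : Type*} [Field F] [Fintype V]

def sumRestrict (p : V → Prop) : (V → F) →ₗ[F] F × ({i // p i} → F) :=
  (Fintype.linearCombination F fun _ => (1 : F)).prod (LinearMap.funLeft F F Subtype.val)

theorem sumRestrict_apply (p : V → Prop) (v : V → F) :
    sumRestrict p v = (∑ i, v i, fun i : {i // p i} => v i) := by
  simp only [sumRestrict, LinearMap.prod_apply, Function.prod_apply,
    Fintype.linearCombination_apply, smul_eq_mul, mul_one, Prod.mk.injEq, true_and]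
  rfl

theorem sumRestrict_surjective {p : V → Prop} {i₀ : V} (hi₀ : ¬p i₀) :
    Function.Surjective (sumRestrict (F := F) p) := by
  classical
  rintro ⟨c, w⟩
  set e : V → F := Function.extend Subtype.val w 0
  refine ⟨e + (c - ∑ i, e i) • Pi.single i₀ 1, ?_⟩
  rw [sumRestrict_apply, Prod.mk.injEq]
  constructor
  · simp [sum_add_distrib, ← mul_sum]
  · funext i
    have hi : (i : V) ≠ i₀ := fun h => hi₀ (h ▸ i.2)
    simp [e, hi]

theorem finrank_ker_sumRestrict_add {p : V → Prop} [Fintype {i // p i}] {i₀ : V} (hi₀ : ¬p i₀) :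
    finrank F (LinearMap.ker (sumRestrict (F := F) p)) + 1 + Fintype.card {i // p i}
      = Fintype.card V := by
  have h := (sumRestrict (F := F) p).finrank_range_add_finrank_ker
  rw [LinearMap.range_eq_top.mpr (sumRestrict_surjective hi₀), finrank_top, finrank_prod,
    finrank_self, finrank_fintype_fun_eq_card, finrank_fintype_fun_eq_card] at h
  omega

end SumRestrict

section CompleteGraph

variable {n : ℕ}

theorem completeM_add_diagonal_mulVec_apply (f v : Fin n → ZMod 2) (i : Fin n) :
    ((completeM n + diagonal f) *ᵥ v) i = ∑ j, v j + (1 + f i) * v i := by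
  have hsplit : completeM n + diagonal f = of (fun _ _ => 1) + diagonal (1 + f) := by
    ext j k
    by_cases h : j = k
    · simp [completeM, h, ← add_assoc, CharTwo.add_self_eq_zero]
    · simp [completeM, h]
  rw [hsplit, add_mulVec, Pi.add_apply, mulVec_diagonal]
  simp [mulVec, dotProduct]

theorem completeM_mulVec_apply (v : Fin n → ZMod 2) (i : Fin n) :
    (completeM n *ᵥ v) i = ∑ j, v j + v i := by
  simpa using completeM_add_diagonal_mulVec_apply 0 v i

theorem eq_sum_of_mem_ker_completeM {v : Fin n → ZMod 2}
    (hv : v ∈ LinearMap.ker (completeM n).mulVecLin) (i : Fin n) : v i = ∑ j, v j := by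
  have := congrFun hv i
  rw [mulVecLin_apply, completeM_mulVec_apply] at this
  exact (CharTwo.add_eq_zero.mp this).symm

theorem ker_completeM_of_even (hn : Even n) : LinearMap.ker (completeM n).mulVecLin = ⊥ := by
  refine eq_bot_iff.mpr fun v hv => ?_
  have hsum : ∑ j, v j = 0 := by
    calc ∑ j, v j = ∑ _j : Fin n, ∑ j, v j :=
          sum_congr rfl fun j _ => eq_sum_of_mem_ker_completeM hv j
      _ = 0 := by simp [hn.natCast_zmod_two]
  exact funext fun i => (eq_sum_of_mem_ker_completeM hv i).trans hsum

theorem ker_completeM_of_odd (hn : Odd n) :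
    LinearMap.ker (completeM n).mulVecLin = ZMod 2 ∙ 1 := by
  ext v
  rw [Submodule.mem_span_singleton]
  constructor
  · exact fun hv => ⟨∑ j, v j, funext fun i => by simp [eq_sum_of_mem_ker_completeM hv i]⟩
  · rintro ⟨c, rfl⟩
    ext i
    simp [completeM_mulVec_apply, hn.natCast_zmod_two, CharTwo.add_self_eq_zero]

theorem ker_completeM_add_diagonal {f : Fin n → ZMod 2} {i₀ : Fin n} (hi₀ : f i₀ ≠ 0) :
    LinearMap.ker (completeM n + diagonal f).mulVecLin
      = LinearMap.ker (sumRestrict fun i => f i = 0) := by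
  have h01 : ∀ a : ZMod 2, a = 0 ∨ a = 1 := by decide
  have hf₀ : f i₀ = 1 := (h01 _).resolve_left hi₀
  ext v
  simp only [LinearMap.mem_ker, sumRestrict_apply, Prod.mk_eq_zero, funext_iff, mulVecLin_apply,
    completeM_add_diagonal_mulVec_apply, Pi.zero_apply, Subtype.forall]
  constructor
  · intro hv
    have hsum : ∑ j, v j = 0 := by simpa [hf₀, CharTwo.add_self_eq_zero] using hv i₀
    exact ⟨hsum, fun i hi => by simpa [hsum, hi] using hv i⟩
  · rintro ⟨hsum, hv⟩ i
    rcases h01 (f i) with hi | hi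
    · simp [hsum, hi, hv i hi]
    · simp [hsum, hi, CharTwo.add_self_eq_zero]

theorem card_sub_rank_completeM : n - (completeM n).rank = if Odd n then 1 else 0 := by
  have h := card_sub_rank_eq_finrank_ker (completeM n)
  rw [Fintype.card_fin] at h
  rw [h]
  split_ifs with hn
  · have : NeZero n := ⟨hn.pos.ne'⟩
    rw [ker_completeM_of_odd hn, finrank_span_singleton one_ne_zero]
  · rw [ker_completeM_of_even (Nat.not_odd_iff_even.mp hn), finrank_bot]

theorem card_sub_rank_completeM_add_diagonal_add_one {f : Fin n → ZMod 2} (hf : f ≠ 0) :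
    n - (completeM n + diagonal f).rank + 1 = (diagonal f).rank := by
  obtain ⟨i₀, hi₀⟩ : ∃ i, f i ≠ 0 := Function.ne_iff.mp hf
  have h := card_sub_rank_eq_finrank_ker (completeM n + diagonal f)
  have hker := finrank_ker_sumRestrict_add (F := ZMod 2) (p := fun i => f i = 0) (i₀ := i₀) hi₀
  have hcompl := Fintype.card_subtype_compl (fun i => f i = 0)
  rw [Fintype.card_fin] at h hker hcompl
  rw [h, ker_completeM_add_diagonal hi₀, rank_diagonal]
  simp only [ne_eq] at hcompl ⊢
  omega

end CompleteGraph

/-- Example 1: `d·[K_n] = (A+Bd)^n - A^n + A^n·d²` if `n` is odd, and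
`d·[K_n] = (A+Bd)^n - A^n + A^n·d` if `n` is even. -/
theorem graphBracket_complete {K : Type*} [CommRing K] (A B d : K) (n : ℕ) :
    d * gBracket (completeM n) A B d =
      (A + B * d) ^ n - A ^ n + A ^ n * (if Odd n then d ^ 2 else d) := by
  have hterm (f : Fin n → ZMod 2) (hf : f ≠ 0) :
      d * (A ^ (n - (diagonal f).rank) * B ^ (diagonal f).rank
        * d ^ (n - (completeM n + diagonal f).rank))
        = A ^ (n - (diagonal f).rank) * (B * d) ^ (diagonal f).rank := by
    rw [← card_sub_rank_completeM_add_diagonal_add_one hf, pow_succ, mul_pow]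
    ring
  have hbinom := Fintype.sum_pow_mul_pow_rank_diagonal (V := Fin n) A (B * d)
  rw [Fintype.card_fin, Fintype.sum_eq_add_sum_compl 0] at hbinom
  rw [gBracket, Fintype.card_fin, mul_sum, Fintype.sum_eq_add_sum_compl 0, ← hbinom,
    sum_congr rfl fun f hf => hterm f (by simpa using hf)]
  simp only [diagonal_zero', add_zero, rank_zero, Nat.sub_zero, card_sub_rank_completeM]
  split_ifs <;> ring
end

section
/- Let K be a field, A, B, d ∈ K with A ≠ 0, and n ≥ 1. Then the lollipop graph satisfies [L_n](A,B,d) = (A − A⁻¹B²)^n + A⁻¹·B·∑_{i=0}^{n−1} (A − A⁻¹B²)^i · [P_{n−i}](A,B,d). -/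
/-!
Split the sum defining the bracket according to the diagonal entry `b` at the looped end
vertex `0`. Toggling that entry turns `L_{m+1} + diag(b, h)` into `P_{m+1} + diag(b + 1, h)`,
and eliminating a vertex carrying a loop (a Schur complement at a pivot `1`) preserves the
nullity; eliminating vertex `0` of `P_{m+1} + diag(1, h)` leaves `L_m + diag(h)`, because it
toggles the loop at the unique neighbour. Comparing the two halves of the sums for `L_{m+1}`
and `P_{m+1}` gives `[L_{m+1}] = (A - A⁻¹B²)[L_m] + A⁻¹B[P_{m+1}]`, which unrolls, from
`[L_0] = 1`, to the stated formula.
-/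

open Matrix BigOperators

/-- The simple path on `k` vertices `0, 1, …, k-1` (vertex `i` adjacent to `j`
iff `|i - j| = 1`), no loops. -/
def pathM (k : ℕ) : Matrix (Fin k) (Fin k) (ZMod 2) :=
  Matrix.of fun i j => if i.1 + 1 = j.1 ∨ j.1 + 1 = i.1 then 1 else 0

/-- The lollipop on `k` vertices: the path `pathM k` with a loop added at the
end vertex `0`. -/
def lolliM (k : ℕ) : Matrix (Fin k) (Fin k) (ZMod 2) :=
  Matrix.of fun i j => if i.1 + 1 = j.1 ∨ j.1 + 1 = i.1 ∨ (i.1 = 0 ∧ j.1 = 0) then 1 else 0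

theorem Submodule.finrank_prod_eq {K M M' : Type*} [Field K] [AddCommGroup M] [AddCommGroup M']
    [Module K M] [Module K M'] [FiniteDimensional K M] [FiniteDimensional K M']
    (p : Submodule K M) (q : Submodule K M') :
    Module.finrank K (p.prod q) = Module.finrank K p + Module.finrank K q := by
  let e : p.prod q ≃ₗ[K] p × q :=
    { toFun x := (⟨x.1.1, x.2.1⟩, ⟨x.1.2, x.2.2⟩)
      invFun x := ⟨(x.1, x.2), x.1.2, x.2.2⟩
      map_add' _ _ := rfl
      map_smul' _ _ := rfl
      left_inv _ := rfl
      right_inv _ := rfl }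
  rw [e.finrank_eq, Module.finrank_prod]

theorem Fin.sum_univ_fun_succ {α M : Type*} [Fintype α] [AddCommMonoid M] {n : ℕ}
    (F : (Fin (n + 1) → α) → M) :
    ∑ f, F f = ∑ a, ∑ h : Fin n → α, F (Fin.cons a h) := by
  rw [← (Fin.consEquiv fun _ => α).sum_comp, Fintype.sum_prod_type]
  rfl

theorem eq_pow_mul_add_sum_of_succ {R : Type*} [CommSemiring R] (x y : ℕ → R) (c : R)
    (h : ∀ m, x (m + 1) = c * x m + y (m + 1)) (n : ℕ) :
    x n = c ^ n * x 0 + ∑ i ∈ Finset.range n, c ^ i * y (n - i) := by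
  induction n with
  | zero => simp
  | succ n ih =>
    rw [h, ih, Finset.sum_range_succ', mul_add, Finset.mul_sum]
    simp only [pow_succ', mul_assoc, Nat.sub_zero, Nat.succ_sub_succ, pow_zero, one_mul]
    ring

namespace Matrix

variable {F : Type*} [Field F]

noncomputable def nullity {m n R : Type*} [Fintype n] [CommRing R] (M : Matrix m n R) : ℕ :=
  Fintype.card n - M.rank

theorem rank_fromBlocks_zero_zero_s9 {l m : Type*} [Fintype l] [Fintype m]
    (X : Matrix l l F) (Y : Matrix m m F) :
    (fromBlocks X 0 0 Y).rank = X.rank + Y.rank := by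
  let e := LinearEquiv.sumArrowLequivProdArrow l m F F
  have he (x : l ⊕ m → F) : e x = (x ∘ Sum.inl, x ∘ Sum.inr) := rfl
  have hconj : (fromBlocks X 0 0 Y).mulVecLin
      = e.symm.toLinearMap ∘ₗ X.mulVecLin.prodMap Y.mulVecLin ∘ₗ e.toLinearMap := by
    ext x (i | i) <;> simp [fromBlocks_mulVec, he, e]
  rw [rank, hconj, LinearMap.range_comp, LinearMap.range_comp, LinearEquiv.range,
    Submodule.map_top, LinearEquiv.finrank_map_eq, LinearMap.range_prodMap,
    Submodule.finrank_prod_eq, rank, rank]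

theorem rank_fromBlocks_of_invertible₁₁ {l m : Type*} [Fintype l] [Fintype m] [DecidableEq l]
    [DecidableEq m] (A : Matrix l l F) (B : Matrix l m F) (C : Matrix m l F) (D : Matrix m m F)
    [Invertible A] :
    (fromBlocks A B C D).rank = Fintype.card l + (D - C * ⅟A * B).rank := by
  rw [fromBlocks_eq_of_invertible₁₁, rank_mul_eq_left_of_isUnit_det,
    rank_mul_eq_right_of_isUnit_det, rank_fromBlocks_zero_zero_s9,
    rank_of_isUnit A (isUnit_of_invertible A)] <;> simp

variable {m : ℕ}

noncomputable def schurComplementZero (N : Matrix (Fin (m + 1)) (Fin (m + 1)) F) :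
    Matrix (Fin m) (Fin m) F :=
  of fun i j => N i.succ j.succ - N i.succ 0 * (N 0 0)⁻¹ * N 0 j.succ

theorem rank_eq_one_add_rank_schurComplementZero (N : Matrix (Fin (m + 1)) (Fin (m + 1)) F)
    (h : N 0 0 ≠ 0) : N.rank = 1 + N.schurComplementZero.rank := by
  let e : Fin 1 ⊕ Fin m ≃ Fin (m + 1) := finSumFinEquiv.trans (finCongr (Nat.add_comm 1 m))
  have he0 : e (Sum.inl 0) = 0 := rfl
  have heS (i : Fin m) : e (Sum.inr i) = i.succ := Fin.ext (Nat.add_comm 1 i)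
  let A : Matrix (Fin 1) (Fin 1) F := of fun _ _ => N 0 0
  let : Invertible A := invertibleOfLeftInverse A (of fun _ _ => (N 0 0)⁻¹) <| by
    ext i j; obtain rfl := Subsingleton.elim i j; simp [A, mul_apply, h]
  have hblocks : N.submatrix e e = fromBlocks A (of fun _ j => N 0 j.succ)
      (of fun i _ => N i.succ 0) (of fun i j => N i.succ j.succ) := by
    ext (i | i) (j | j) <;> simp [A, he0, heS, Fin.fin_one_eq_zero]
  rw [← rank_submatrix N e e, hblocks, rank_fromBlocks_of_invertible₁₁, Fintype.card_fin]
  congr 2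
  ext i j
  simp [schurComplementZero, mul_apply, A]

theorem nullity_eq_nullity_schurComplementZero (N : Matrix (Fin (m + 1)) (Fin (m + 1)) F)
    (h : N 0 0 ≠ 0) : N.nullity = N.schurComplementZero.nullity := by
  simp only [nullity, rank_eq_one_add_rank_schurComplementZero N h, Fintype.card_fin]
  omega

theorem rank_diagonal_cons_zero (h : Fin m → F) :
    (diagonal (Fin.cons 0 h : Fin (m + 1) → F)).rank = (diagonal h).rank := by
  classical
  simp only [rank_diagonal, Fintype.card_subtype, Finset.card_filter, Fin.sum_univ_succ]
  simp

theorem rank_diagonal_cons_of_ne_zero {b : F} (hb : b ≠ 0) (h : Fin m → F) :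
    (diagonal (Fin.cons b h : Fin (m + 1) → F)).rank = (diagonal h).rank + 1 := by
  classical
  simp only [rank_diagonal, Fintype.card_subtype, Finset.card_filter, Fin.sum_univ_succ]
  simp [hb, add_comm]

theorem nullity_diagonal_cons_zero (h : Fin m → F) :
    (diagonal (Fin.cons 0 h : Fin (m + 1) → F)).nullity = (diagonal h).nullity + 1 := by
  have := (diagonal h).rank_le_card_width
  simp only [nullity, rank_diagonal_cons_zero, Fintype.card_fin] at *
  omega

theorem nullity_diagonal_cons_of_ne_zero {b : F} (hb : b ≠ 0) (h : Fin m → F) :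
    (diagonal (Fin.cons b h : Fin (m + 1) → F)).nullity = (diagonal h).nullity := by
  simp only [nullity, rank_diagonal_cons_of_ne_zero hb, Fintype.card_fin]
  omega

end Matrix

section Bracket

variable {R : Type*} [CommRing R] (A B d : R)

noncomputable def diagWeight {V : Type*} [Fintype V] [DecidableEq V] (f : V → ZMod 2) : R :=
  A ^ (diagonal f).nullity * B ^ (diagonal f).rank

theorem gBracket_eq_sum_diagWeight {V : Type*} [Fintype V] [DecidableEq V]
    (M : Matrix V V (ZMod 2)) :
    gBracket M A B d = ∑ f, diagWeight A B f * d ^ (M + diagonal f).nullity :=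
  rfl

theorem gBracket_of_isEmpty {V : Type*} [Fintype V] [DecidableEq V] [IsEmpty V]
    (M : Matrix V V (ZMod 2)) : gBracket M A B d = 1 := by
  have hrank (X : Matrix V V (ZMod 2)) : X.rank = 0 := by rw [Subsingleton.elim X 0, rank_zero]
  simp [gBracket, hrank]

variable {m : ℕ}

theorem diagWeight_cons_zero (h : Fin m → ZMod 2) :
    diagWeight A B (Fin.cons 0 h : Fin (m + 1) → ZMod 2) = A * diagWeight A B h := by
  rw [diagWeight, diagWeight, nullity_diagonal_cons_zero, rank_diagonal_cons_zero]
  ring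

theorem diagWeight_cons_one (h : Fin m → ZMod 2) :
    diagWeight A B (Fin.cons 1 h : Fin (m + 1) → ZMod 2) = B * diagWeight A B h := by
  rw [diagWeight, diagWeight, nullity_diagonal_cons_of_ne_zero one_ne_zero,
    rank_diagonal_cons_of_ne_zero one_ne_zero]
  ring

theorem gBracket_succ (M : Matrix (Fin (m + 1)) (Fin (m + 1)) (ZMod 2)) :
    gBracket M A B d =
      A * ∑ h, diagWeight A B h * d ^ (M + diagonal (Fin.cons 0 h)).nullity +
        B * ∑ h, diagWeight A B h * d ^ (M + diagonal (Fin.cons 1 h)).nullity := by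
  rw [gBracket_eq_sum_diagWeight, Fin.sum_univ_fun_succ,
    show ∀ g : ZMod 2 → R, ∑ b, g b = g 0 + g 1 from Fin.sum_univ_two, Finset.mul_sum,
    Finset.mul_sum]
  simp only [diagWeight_cons_zero, diagWeight_cons_one, mul_assoc]

end Bracket

section PathLollipop

variable {m : ℕ}

theorem pathM_succ_succ (i j : Fin m) : pathM (m + 1) i.succ j.succ = pathM m i j := by
  simp [pathM]

theorem pathM_succ_zero (i : Fin m) : pathM (m + 1) i.succ 0 = if (i : ℕ) = 0 then 1 else 0 := by
  simp [pathM]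

theorem pathM_zero_succ (j : Fin m) : pathM (m + 1) 0 j.succ = if (j : ℕ) = 0 then 1 else 0 := by
  simp [pathM]

theorem lolliM_apply (i j : Fin m) :
    lolliM m i j = pathM m i j + if (i : ℕ) = 0 ∧ (j : ℕ) = 0 then 1 else 0 := by
  simp only [lolliM, pathM, of_apply]
  split_ifs <;> first | rfl | omega

theorem lolliM_succ_add_diagonal_cons (b : ZMod 2) (h : Fin m → ZMod 2) :
    lolliM (m + 1) + diagonal (Fin.cons b h) = pathM (m + 1) + diagonal (Fin.cons (b + 1) h) := by
  ext i j
  rw [Matrix.add_apply, Matrix.add_apply, lolliM_apply]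
  induction i using Fin.cases <;> induction j using Fin.cases <;>
    simp [diagonal_apply, (Fin.succ_ne_zero _).symm, add_comm, add_left_comm]

theorem schurComplementZero_pathM_add_diagonal_cons_one (h : Fin m → ZMod 2) :
    (pathM (m + 1) + diagonal (Fin.cons 1 h)).schurComplementZero = lolliM m + diagonal h := by
  ext i j
  simp only [schurComplementZero, of_apply, Matrix.add_apply, pathM_succ_succ, pathM_succ_zero,
    pathM_zero_succ, lolliM_apply, diagonal_apply, Fin.succ_inj, Fin.succ_ne_zero,
    (Fin.succ_ne_zero _).symm, Fin.cons_succ, Fin.cons_zero]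
  by_cases hi : (i : ℕ) = 0 <;> by_cases hj : (j : ℕ) = 0 <;>
    simp [hi, hj, pathM, CharTwo.sub_eq_add, add_comm]

theorem nullity_pathM_add_diagonal_cons_one (h : Fin m → ZMod 2) :
    (pathM (m + 1) + diagonal (Fin.cons 1 h)).nullity = (lolliM m + diagonal h).nullity := by
  rw [nullity_eq_nullity_schurComplementZero _ (by simp [pathM]),
    schurComplementZero_pathM_add_diagonal_cons_one]

end PathLollipop

theorem gBracket_lolliM_succ {K : Type*} [Field K] (A B d : K) (hA : A ≠ 0) (m : ℕ) :
    gBracket (lolliM (m + 1)) A B d =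
      (A - A⁻¹ * B ^ 2) * gBracket (lolliM m) A B d + A⁻¹ * B * gBracket (pathM (m + 1)) A B d := by
  have hL := gBracket_succ A B d (lolliM (m + 1))
  have hP := gBracket_succ A B d (pathM (m + 1))
  simp only [lolliM_succ_add_diagonal_cons, zero_add, CharTwo.add_self_eq_zero,
    nullity_pathM_add_diagonal_cons_one, ← gBracket_eq_sum_diagWeight] at hL hP
  rw [hL, hP]
  field_simp
  ring

theorem graphBracket_lollipop_general {K : Type*} [Field K] (A B d : K) (hA : A ≠ 0)
    (n : ℕ) :
    gBracket (lolliM n) A B d =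
      (A - A⁻¹ * B ^ 2) ^ n +
        A⁻¹ * B * ∑ i ∈ Finset.range n,
          (A - A⁻¹ * B ^ 2) ^ i * gBracket (pathM (n - i)) A B d := by
  rw [eq_pow_mul_add_sum_of_succ (fun k => gBracket (lolliM k) A B d)
    (fun k => A⁻¹ * B * gBracket (pathM k) A B d) _ (gBracket_lolliM_succ A B d hA) n,
    gBracket_of_isEmpty, mul_one, Finset.mul_sum]
  congr 1
  refine Finset.sum_congr rfl fun i _ => ?_
  ring

/-- Example 2: `[L_n] = (A - A⁻¹B²)^n + A⁻¹B ∑_{i=0}^{n-1} (A - A⁻¹B²)^i [P_{n-i}]`. -/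
theorem graphBracket_lollipop {K : Type*} [Field K] (A B d : K) (hA : A ≠ 0)
    (n : ℕ) (hn : 1 ≤ n) :
    gBracket (lolliM n) A B d =
      (A - A⁻¹ * B ^ 2) ^ n +
        A⁻¹ * B * ∑ i ∈ Finset.range n,
          (A - A⁻¹ * B ^ 2) ^ i * gBracket (pathM (n - i)) A B d :=
  graphBracket_lollipop_general A B d hA n
end

section
/- Let K be a field, A, B, d ∈ K with A ≠ 0, and n ≥ 4. Then the path brackets satisfy the linear recurrence [P_n](A,B,d) = A⁻¹B²·[P_{n−1}](A,B,d) + (A+B)(2A−B)·[P_{n−2}](A,B,d) − (A²+AB)·(A − A⁻¹B²)²·[P_{n−4}](A,B,d). -/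
open Matrix BigOperators

/-!
For a diagonal `Δ = diag f`, the matrix `P_n + Δ` is tridiagonal, so a kernel vector `z` is
determined by `z₀` through `z_{j+1} = z_{j-1} + f_j z_j`: it is `z₀` times the vector of prefix
continuants `K_j(f_0, …, f_{j-1})`, and the last row forces `z₀ K_n(f) = 0`. Hence
`ν(P_n + Δ) = [K_n(f) = 0]`. Grouping the `Δ` by the pair `(K_n, K_{n-1}) ∈ GF(2)²`, appending a
diagonal entry acts on these pairs by a fixed transfer rule, so the four fiber weights satisfy the
order-three recurrence of the characteristic polynomial `t³ - A t² - (A² + AB) t + (A + B)²(A - B)`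
(the fiber of `(0, 0)` is empty, but its trivial eigenvalue `A + B` is a root anyway). Multiplying
this polynomial by `t + A - A⁻¹B²` gives the stated recurrence, which has no `P_{n-3}` term.
-/

section Continuant

variable {R : Type*} [CommRing R]

/-- `continuantSeq a (m + 1)` is the continuant `K_m(a 0, …, a (m - 1))`; the leading `0` plays
the role of `K_{-1}`, which makes the first row of a tridiagonal system like all the others. -/
def continuantSeq (a : ℕ → R) : ℕ → R
  | 0 => 0
  | 1 => 1
  | m + 2 => a m * continuantSeq a (m + 1) + continuantSeq a m

theorem continuantSeq_congr {a b : ℕ → R} {k : ℕ} (h : ∀ i < k, a i = b i) :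
    ∀ m ≤ k + 1, continuantSeq a m = continuantSeq b m
  | 0, _ => rfl
  | 1, _ => rfl
  | m + 2, hm => by
    rw [continuantSeq, continuantSeq, h m (by omega), continuantSeq_congr h (m + 1) (by omega),
      continuantSeq_congr h m (by omega)]

theorem eq_mul_continuantSeq {a u : ℕ → R} {k : ℕ} (h0 : u 0 = 0)
    (hrec : ∀ m, m + 2 ≤ k → u (m + 2) = a m * u (m + 1) + u m) :
    ∀ m ≤ k, u m = u 1 * continuantSeq a m
  | 0, _ => by rw [h0, continuantSeq, mul_zero]
  | 1, _ => by rw [continuantSeq, mul_one]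
  | m + 2, hm => by
    rw [hrec m hm, eq_mul_continuantSeq h0 hrec (m + 1) (by omega),
      eq_mul_continuantSeq h0 hrec m (by omega), continuantSeq]
    ring

def zeroExtend {k : ℕ} (g : Fin k → R) (i : ℕ) : R :=
  if h : i < k then g ⟨i, h⟩ else 0

theorem zeroExtend_val {k : ℕ} (g : Fin k → R) (i : Fin k) : zeroExtend g i = g i := by
  simp [zeroExtend]

theorem zeroExtend_snoc_of_lt {k : ℕ} (g : Fin k → R) (x : R) {i : ℕ} (hi : i < k) :
    zeroExtend (Fin.snoc g x : Fin (k + 1) → R) i = zeroExtend g i := by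
  simp [zeroExtend, hi, Nat.lt_succ_of_lt hi, Fin.snoc, Fin.castLT]

theorem zeroExtend_snoc_self {k : ℕ} (g : Fin k → R) (x : R) :
    zeroExtend (Fin.snoc g x : Fin (k + 1) → R) k = x := by
  simp [zeroExtend, Fin.snoc]

def continuantPair {k : ℕ} (g : Fin k → R) : R × R :=
  (continuantSeq (zeroExtend g) (k + 1), continuantSeq (zeroExtend g) k)

theorem continuantPair_snoc {k : ℕ} (g : Fin k → R) (x : R) :
    continuantPair (Fin.snoc g x : Fin (k + 1) → R) =
      (x * (continuantPair g).1 + (continuantPair g).2, (continuantPair g).1) := by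
  have hagree := fun i (hi : i < k) => zeroExtend_snoc_of_lt g x hi
  simp only [continuantPair, continuantSeq, zeroExtend_snoc_self,
    continuantSeq_congr hagree (k + 1) le_rfl, continuantSeq_congr hagree k (by omega)]

def prefixContinuants {n : ℕ} (f : Fin n → R) : Fin n → R :=
  fun j => continuantSeq (zeroExtend f) (j + 1)

end Continuant

theorem pathM_mulVec_apply {n : ℕ} (u : ℕ → ZMod 2) (hu : u 0 = 0) (i : Fin n) :
    (pathM n *ᵥ fun j => u (j + 1)) i = u i + if i.1 + 1 < n then u (i + 2) else 0 := by
  simp only [mulVec, dotProduct, pathM, of_apply, ite_mul, one_mul, zero_mul]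
  rw [Fin.sum_univ_eq_sum_range (fun j => if i.1 + 1 = j ∨ j + 1 = i.1 then u (j + 1) else 0)]
  have hsplit : ∀ j : ℕ, (if i.1 + 1 = j ∨ j + 1 = i.1 then u (j + 1) else 0) =
      (if i.1 + 1 = j then u (i.1 + 2) else 0) + (if j + 1 = i.1 then u i.1 else 0) := by
    intro j
    by_cases h1 : i.1 + 1 = j
    · subst h1; simp [show i.1 + 1 + 1 ≠ i.1 by omega]
    · by_cases h2 : j + 1 = i.1 <;> simp [h1, h2]
  simp only [hsplit, Finset.sum_add_distrib, Finset.sum_ite_eq, Finset.mem_range]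
  obtain ⟨i, hi⟩ := i
  cases i with
  | zero => simp [hu, add_comm]
  | succ i => simp [Finset.sum_ite_eq', show i < n by omega, add_comm]

theorem pathM_add_diagonal_mulVec_prefixContinuants {n : ℕ} (f : Fin n → ZMod 2) (i : Fin n) :
    ((pathM n + diagonal f) *ᵥ prefixContinuants f) i =
      if i.1 + 1 = n then (continuantPair f).1 else 0 := by
  have h2 : (2 : ZMod 2) = 0 := rfl
  unfold prefixContinuants continuantPair
  set c := continuantSeq (zeroExtend f)
  have hrec : c (i + 2) = f i * c (i + 1) + c i := by
    rw [← zeroExtend_val f i]; rfl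
  rw [add_mulVec, Pi.add_apply, pathM_mulVec_apply _ rfl, mulVec_diagonal]
  split_ifs with hlt hlast hlast
  · omega
  · linear_combination hrec + (c i + f i * c (i + 1)) * h2
  · rw [show n + 1 = i.1 + 2 by omega, hrec]; ring
  · omega

theorem ker_pathM_add_diagonal_le_span {n : ℕ} (f : Fin n → ZMod 2) :
    LinearMap.ker (pathM n + diagonal f).mulVecLin ≤ ZMod 2 ∙ prefixContinuants f := by
  intro z hz
  rw [LinearMap.mem_ker, mulVecLin_apply] at hz
  set u := zeroExtend (Fin.cons 0 z : Fin (n + 1) → ZMod 2)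
  have hu : ∀ j : Fin n, u (j + 1) = z j := fun j => zeroExtend_val _ j.succ
  have hz' : z = fun j : Fin n => u (j + 1) := funext fun j => (hu j).symm
  have hrow : ∀ m, m + 2 ≤ n → u (m + 2) = zeroExtend f m * u (m + 1) + u m := by
    intro m hm
    have h2 : (2 : ZMod 2) = 0 := rfl
    have := congrFun hz ⟨m, by omega⟩
    rw [hz', add_mulVec, Pi.add_apply, pathM_mulVec_apply u (zeroExtend_val _ 0), mulVec_diagonal,
      ← zeroExtend_val f, Pi.zero_apply] at this
    simp only [if_pos (show m + 1 < n by omega)] at this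
    linear_combination this - (u m + zeroExtend f m * u (m + 1)) * h2
  refine Submodule.mem_span_singleton.mpr ⟨u 1, funext fun j => ?_⟩
  rw [Pi.smul_apply, smul_eq_mul, prefixContinuants, ← hu j,
    eq_mul_continuantSeq (zeroExtend_val _ 0) hrow (j + 1) (by omega)]

theorem prefixContinuants_mem_ker_iff {n : ℕ} (hn : 0 < n) (f : Fin n → ZMod 2) :
    prefixContinuants f ∈ LinearMap.ker (pathM n + diagonal f).mulVecLin ↔
      (continuantPair f).1 = 0 := by
  simp only [LinearMap.mem_ker, mulVecLin_apply, funext_iff, Pi.zero_apply,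
    pathM_add_diagonal_mulVec_prefixContinuants, ite_eq_right_iff]
  exact ⟨fun h => h ⟨n - 1, by omega⟩ (by simp; omega), fun h _ _ => h⟩

theorem finrank_ker_pathM_add_diagonal {n : ℕ} (f : Fin n → ZMod 2) :
    Module.finrank (ZMod 2) (LinearMap.ker (pathM n + diagonal f).mulVecLin) =
      if (continuantPair f).1 = 0 then 1 else 0 := by
  rcases Nat.eq_zero_or_pos n with rfl | hn
  · simp [continuantPair, continuantSeq, Subsingleton.elim _ (⊥ : Submodule _ (Fin 0 → ZMod 2))]
  have hle := ker_pathM_add_diagonal_le_span f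
  have hx : prefixContinuants f ≠ 0 := fun h => by
    simpa [prefixContinuants, continuantSeq] using congrFun h ⟨0, hn⟩
  split_ifs with hK
  · rw [le_antisymm hle ((Submodule.span_singleton_le_iff_mem _ _).mpr
      ((prefixContinuants_mem_ker_iff hn f).mpr hK)), finrank_span_singleton hx]
  · have hlt := Submodule.finrank_lt_finrank_of_lt (lt_of_le_of_ne hle fun h =>
      hK ((prefixContinuants_mem_ker_iff hn f).mp (h ▸ Submodule.mem_span_singleton_self _)))
    rwa [finrank_span_singleton hx, Nat.lt_one_iff] at hlt

theorem nullity_pathM_add_diagonal {n : ℕ} (f : Fin n → ZMod 2) :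
    n - (pathM n + diagonal f).rank = if (continuantPair f).1 = 0 then 1 else 0 := by
  have := LinearMap.finrank_range_add_finrank_ker (pathM n + diagonal f).mulVecLin
  rw [Module.finrank_fin_fun, finrank_ker_pathM_add_diagonal] at this
  rw [Matrix.rank]
  omega

theorem pow_nullity_mul_pow_rank_diagonal {V F M : Type*} [Fintype V] [DecidableEq V] [Field F]
    [DecidableEq F] [CommMonoid M] (g : V → F) (A B : M) :
    A ^ (Fintype.card V - (diagonal g).rank) * B ^ (diagonal g).rank =
      ∏ i, if g i = 0 then A else B := by
  rw [rank_diagonal, Fintype.card_subtype, Finset.prod_ite, Finset.prod_const, Finset.prod_const,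
    ← Finset.card_univ, ← Finset.card_filter_add_card_filter_not (s := .univ) (g · = 0)]
  simp

theorem continuantPair_snoc_eq_iff {k : ℕ} (g : Fin k → ZMod 2) (x : ZMod 2)
    (s : ZMod 2 × ZMod 2) :
    continuantPair (Fin.snoc g x : Fin (k + 1) → ZMod 2) = s ↔
      continuantPair g = (s.2, s.1 + x * s.2) := by
  rw [continuantPair_snoc]
  generalize continuantPair g = p
  revert x p s
  decide

section FiberWeight

variable {K : Type*} [CommRing K]

/-- `∑ A^{ν(Δ)} B^{ρ(Δ)}` over the diagonals `Δ = diag g` with `continuantPair g = s`. -/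
def continuantFiberWeight (A B : K) (k : ℕ) (s : ZMod 2 × ZMod 2) : K :=
  ∑ g : Fin k → ZMod 2 with continuantPair g = s, ∏ i, if g i = 0 then A else B

theorem continuantFiberWeight_succ (A B : K) (k : ℕ) (s : ZMod 2 × ZMod 2) :
    continuantFiberWeight A B (k + 1) s =
      A * continuantFiberWeight A B k (s.2, s.1) +
        B * continuantFiberWeight A B k (s.2, s.1 + s.2) := by
  simp only [continuantFiberWeight, Finset.sum_filter, Finset.mul_sum]
  have hsum : ∀ F : ZMod 2 → K, ∑ x, F x = F 0 + F 1 := Fin.sum_univ_two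
  rw [← (Fin.snocEquiv fun _ => ZMod 2).sum_comp, Fintype.sum_prod_type, hsum]
  simp [Fin.snocEquiv, continuantPair_snoc_eq_iff, Fin.prod_univ_castSucc, mul_comm]

theorem continuantFiberWeight_add_three (A B : K) (k : ℕ) (s : ZMod 2 × ZMod 2) :
    continuantFiberWeight A B (k + 3) s =
      A * continuantFiberWeight A B (k + 2) s
        + (A ^ 2 + A * B) * continuantFiberWeight A B (k + 1) s
        - (A + B) ^ 2 * (A - B) * continuantFiberWeight A B k s := by
  have h01 : ∀ x : ZMod 2, x = 0 ∨ x = 1 := by decide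
  have h11 : (1 : ZMod 2) + 1 = 0 := rfl
  obtain ⟨x, y⟩ := s
  rcases h01 x with rfl | rfl <;> rcases h01 y with rfl | rfl <;>
    simp only [continuantFiberWeight_succ, h11, zero_add, add_zero] <;> ring

theorem gBracket_pathM_eq_sum (A B d : K) (k : ℕ) :
    gBracket (pathM k) A B d =
      ∑ s : ZMod 2 × ZMod 2, (if s.1 = 0 then d else 1) * continuantFiberWeight A B k s := by
  simp_rw [gBracket, pow_nullity_mul_pow_rank_diagonal, Fintype.card_fin,
    nullity_pathM_add_diagonal, continuantFiberWeight, Finset.mul_sum]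
  rw [← Finset.sum_fiberwise Finset.univ continuantPair]
  refine Finset.sum_congr rfl fun s _ => Finset.sum_congr rfl fun g hg => ?_
  rw [(Finset.mem_filter.mp hg).2]
  split_ifs <;> simp [mul_comm]

theorem gBracket_pathM_add_three (A B d : K) (k : ℕ) :
    gBracket (pathM (k + 3)) A B d =
      A * gBracket (pathM (k + 2)) A B d + (A ^ 2 + A * B) * gBracket (pathM (k + 1)) A B d
        - (A + B) ^ 2 * (A - B) * gBracket (pathM k) A B d := by
  simp only [gBracket_pathM_eq_sum, continuantFiberWeight_add_three, Finset.mul_sum,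
    ← Finset.sum_add_distrib, ← Finset.sum_sub_distrib]
  exact Finset.sum_congr rfl fun _ _ => by ring

end FiberWeight

/-- Example 3 (recurrence): for `n ≥ 4`,
`[P_n] = A⁻¹B²[P_{n-1}] + (A+B)(2A-B)[P_{n-2}] - (A²+AB)(A-A⁻¹B²)²[P_{n-4}]`. -/
theorem graphBracket_path_recurrence {K : Type*} [Field K] (A B d : K) (hA : A ≠ 0)
    (n : ℕ) (hn : 4 ≤ n) :
    gBracket (pathM n) A B d =
      A⁻¹ * B ^ 2 * gBracket (pathM (n - 1)) A B d
      + (A + B) * (2 * A - B) * gBracket (pathM (n - 2)) A B d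
      - (A ^ 2 + A * B) * (A - A⁻¹ * B ^ 2) ^ 2 * gBracket (pathM (n - 4)) A B d := by
  obtain ⟨m, rfl⟩ : ∃ m, n = m + 4 := ⟨n - 4, by omega⟩
  rw [show m + 4 - 1 = m + 3 by omega, show m + 4 - 2 = m + 2 by omega, Nat.add_sub_cancel]
  rw [gBracket_pathM_add_three A B d (m + 1), gBracket_pathM_add_three A B d m]
  field_simp
  ring
end

section
/- For all real numbers A, B, d and every n ≥ 0, the path bracket satisfies [P_n](A,B,d) = ((d+2)/3)·(A+B)^n − ((d−1)/(3·2^n))·ε_n + ((d−1)/(3·2^{n−2}))·A·∑_{j=0}^{⌊(n−1)/2⌋} (4A²−3B²)^j·(−B)^{n−2j−1}·C(n,2j+1) + ((d−1)/(3·2^n))·∑_{j=0}^{⌊(n−1)/2⌋} (4A²−3B²)^j·(−B)^{n−2j}·(3·C(n,2j+1) − C(n,2j)), where ε_n = (4A²−3B²)^{n/2} if n is even and ε_n = 0 if n is odd, and C(n,k) denotes the binomial coefficient. -/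
open Matrix BigOperators

/-!
Over GF(2) a vector `x` lies in the kernel of `pathM n + diagonal f` iff, padded with zeros at both
ends, it satisfies `x (k + 1) = f k * x k + x (k - 1)`. So the kernel is spanned by the continuant
sequence `u` of `f` if `u n = 0` and is trivial otherwise, and
`[P_n] = ∑_f A ^ #{f = 0} * B ^ #{f = 1} * d ^ [u n = 0]`. Appending a letter `a` to `f` sends
`(u n, u (n - 1))` to `(a * u n + u (n - 1), u n)`, so this sum is the `n`-th power of a transfer
matrix on the three nonzero states. Apart from `A + B`, its eigenvalues are
`(-B ± √(4A² - 3B²)) / 2`; computing in `K[√(4A² - 3B²)]` and expanding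
`(-B + √(4A² - 3B²)) ^ n` binomially gives the closed form.
-/

namespace PathBracket

open Finset Module

section Sums

theorem sum_range_two_mul {M : Type*} [AddCommMonoid M] (g : ℕ → M) (m : ℕ) :
    ∑ k ∈ range (2 * m), g k = ∑ j ∈ range m, (g (2 * j) + g (2 * j + 1)) := by
  induction m with
  | zero => simp
  | succ m ih =>
    rw [mul_add, mul_one, sum_range_succ, sum_range_succ, sum_range_succ, ih, add_assoc]

theorem sum_range_succ_eq_sum_pairs {M : Type*} [AddCommMonoid M] (g : ℕ → M) (n : ℕ) :
    ∑ k ∈ range (n + 1), g k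
      = ∑ j ∈ range ((n + 1) / 2), (g (2 * j) + g (2 * j + 1)) + if Even n then g n else 0 := by
  obtain ⟨m, rfl | rfl⟩ := Nat.even_or_odd' n
  · rw [sum_range_succ, if_pos (even_two_mul m), show (2 * m + 1) / 2 = m by omega,
      sum_range_two_mul]
  · rw [if_neg (Nat.not_even_iff_odd.mpr (odd_two_mul_add_one m)), add_zero,
      show 2 * m + 1 + 1 = 2 * (m + 1) by ring, sum_range_two_mul,
      show 2 * (m + 1) / 2 = m + 1 by omega]

end Sums

section QuadraticAlgebra

open QuadraticAlgebra

variable {R : Type*} [CommRing R]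

theorem omega_pow_two_mul (a : R) (j : ℕ) :
    (ω : QuadraticAlgebra R a 0) ^ (2 * j) = ⟨a ^ j, 0⟩ := by
  rw [pow_mul, sq, omega_mul_omega_eq_mk]
  induction j with
  | zero => ext <;> simp
  | succ j ih => ext <;> simp [pow_succ, ih]

theorem omega_pow_two_mul_add_one (a : R) (j : ℕ) :
    (ω : QuadraticAlgebra R a 0) ^ (2 * j + 1) = ⟨0, a ^ j⟩ := by
  ext <;> simp [pow_succ _ (2 * j), omega_pow_two_mul]

theorem mk_one_pow_eq_sum (a x : R) (n : ℕ) :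
    (⟨x, 1⟩ : QuadraticAlgebra R a 0) ^ n
      = ∑ k ∈ range (n + 1),
          (x ^ (n - k) * n.choose k) • (ω : QuadraticAlgebra R a 0) ^ k := by
  rw [mk_eq_add_smul_omega, one_smul, add_comm, add_pow]
  refine sum_congr rfl fun k _ => ?_
  rw [Algebra.smul_def, map_mul, map_pow, map_natCast]
  ring

theorem re_mk_one_pow (a x : R) (n : ℕ) :
    ((⟨x, 1⟩ : QuadraticAlgebra R a 0) ^ n).re
      = ∑ j ∈ range ((n + 1) / 2), a ^ j * x ^ (n - 2 * j) * (n.choose (2 * j) : R)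
        + if Even n then a ^ (n / 2) else 0 := by
  rw [mk_one_pow_eq_sum, ← reₗ_apply, map_sum, sum_range_succ_eq_sum_pairs]
  congr 1
  · refine sum_congr rfl fun j _ => ?_
    simp only [omega_pow_two_mul, omega_pow_two_mul_add_one, reₗ_apply, smul_mk, smul_eq_mul,
      mul_zero, add_zero]
    ring
  · split_ifs with h
    · obtain ⟨m, rfl⟩ := h
      simp [← two_mul, omega_pow_two_mul]
    · rfl

theorem im_mk_one_pow (a x : R) (n : ℕ) :
    ((⟨x, 1⟩ : QuadraticAlgebra R a 0) ^ n).im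
      = ∑ j ∈ range ((n + 1) / 2),
          a ^ j * x ^ (n - 2 * j - 1) * (n.choose (2 * j + 1) : R) := by
  rw [mk_one_pow_eq_sum, ← imₗ_apply, map_sum, sum_range_succ_eq_sum_pairs]
  have hlast : (if Even n then imₗ a 0 ((x ^ (n - n) * n.choose n) • ω ^ n) else 0) = 0 := by
    split_ifs with h
    · obtain ⟨m, rfl⟩ := h
      simp [← two_mul, omega_pow_two_mul]
    · rfl
  rw [hlast, add_zero]
  refine sum_congr rfl fun j _ => ?_
  simp only [omega_pow_two_mul, omega_pow_two_mul_add_one, imₗ_apply, smul_mk, smul_eq_mul,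
    mul_zero, zero_add, Nat.sub_sub]
  ring

theorem mul_im_mk_one_pow (a x : R) (n : ℕ) :
    x * ((⟨x, 1⟩ : QuadraticAlgebra R a 0) ^ n).im
      = ∑ j ∈ range ((n + 1) / 2), a ^ j * x ^ (n - 2 * j) * (n.choose (2 * j + 1) : R) := by
  rw [im_mk_one_pow, mul_sum]
  refine sum_congr rfl fun j hj => ?_
  obtain ⟨m, hm⟩ : ∃ m, n - 2 * j = m + 1 :=
    ⟨n - 2 * j - 1, by have := mem_range.1 hj; omega⟩
  rw [hm, Nat.add_sub_cancel, pow_succ]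
  ring

end QuadraticAlgebra

section Weights

variable {V K : Type*} [Fintype V] [DecidableEq V] [CommRing K]

theorem pow_card_sub_rank_diagonal_mul_pow_rank {F : Type*} [Field F] [DecidableEq F]
    (A B : K) (f : V → F) :
    A ^ (Fintype.card V - (diagonal f).rank) * B ^ (diagonal f).rank
      = ∏ i, if f i = 0 then A else B := by
  rw [rank_diagonal, prod_ite, prod_const, prod_const, Fintype.card_subtype,
    ← card_univ, ← card_filter_add_card_filter_not (p := fun i => f i = 0), Nat.add_sub_cancel]

theorem gBracket_eq_sum_prod (M : Matrix V V (ZMod 2)) (A B d : K) :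
    gBracket M A B d = ∑ f : V → ZMod 2,
      (∏ i, if f i = 0 then A else B) * d ^ (Fintype.card V - (M + diagonal f).rank) := by
  simp only [gBracket, pow_card_sub_rank_diagonal_mul_pow_rank]

end Weights

section Continuant

variable {R : Type*} [CommSemiring R]

def continuant (g : ℕ → R) : ℕ → R
  | 0 => 0
  | 1 => 1
  | k + 2 => g (k + 1) * continuant g (k + 1) + continuant g k

theorem eq_mul_continuant {g y : ℕ → R} {m : ℕ} (h0 : y 0 = 0)
    (hrec : ∀ k < m, y (k + 2) = g (k + 1) * y (k + 1) + y k) :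
    ∀ k ≤ m + 1, y k = y 1 * continuant g k := by
  intro k hk
  induction k using Nat.twoStepInduction with
  | zero => simp [h0, continuant]
  | one => simp [continuant]
  | more k ih₀ ih₁ =>
    rw [hrec k (by omega), ih₀ (by omega), ih₁ (by omega), continuant]
    ring

theorem continuant_congr {g g' : ℕ → R} {m : ℕ} (h : ∀ k ≤ m, g k = g' k) :
    ∀ k ≤ m + 1, continuant g' k = continuant g k := by
  have := eq_mul_continuant (g := g) (y := continuant g') (m := m) rfl fun k hk => by
    rw [continuant, h (k + 1) hk]
  simpa [continuant] using this

end Continuant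

section ToSeq

variable {R : Type*} [AddCommMonoid R] {n : ℕ}

/-- `x` placed at positions `1, …, n` of an otherwise zero sequence. -/
def toSeq (x : Fin n → R) (k : ℕ) : R :=
  ∑ i : Fin n, if (i : ℕ) + 1 = k then x i else 0

theorem toSeq_zero (x : Fin n → R) : toSeq x 0 = 0 :=
  sum_eq_zero fun i _ => if_neg (Nat.succ_ne_zero i)

theorem toSeq_succ (x : Fin n → R) (i : Fin n) : toSeq x (i + 1) = x i := by
  simp only [toSeq, add_left_inj, Fin.val_inj, Fintype.sum_ite_eq']

theorem toSeq_of_lt (x : Fin n → R) {k : ℕ} (hk : n < k) : toSeq x k = 0 :=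
  sum_eq_zero fun i _ => if_neg (by omega)

theorem toSeq_snoc (x : Fin n → R) (a : R) (k : ℕ) :
    toSeq (Fin.snoc x a : Fin (n + 1) → R) k = toSeq x k + if n + 1 = k then a else 0 := by
  simp [toSeq, Fin.sum_univ_castSucc]

end ToSeq

section Kernel

variable {n : ℕ}

theorem pathM_add_diagonal_mulVec_apply (f x : Fin n → ZMod 2) (i : Fin n) :
    ((pathM n + diagonal f) *ᵥ x) i = toSeq x (i + 2) + f i * x i + toSeq x i := by
  have hsplit : ∀ j : Fin n, pathM n i j * x j
      = (if (j : ℕ) + 1 = i + 2 then x j else 0) + (if (j : ℕ) + 1 = i then x j else 0) := by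
    intro j
    simp only [pathM, of_apply]
    split_ifs <;> first | omega | simp
  rw [add_mulVec, Pi.add_apply, mulVec_diagonal, mulVec, dotProduct,
    sum_congr rfl fun j _ => hsplit j, sum_add_distrib]
  exact add_right_comm _ _ _

theorem pathM_add_diagonal_mulVec_eq_zero_iff (f x : Fin n → ZMod 2) :
    (pathM n + diagonal f) *ᵥ x = 0
      ↔ ∀ k < n, toSeq x (k + 2) = toSeq f (k + 1) * toSeq x (k + 1) + toSeq x k := by
  have hrow : ∀ i : Fin n, ((pathM n + diagonal f) *ᵥ x) i = 0
      ↔ toSeq x (i + 2) = toSeq f (i + 1) * toSeq x (i + 1) + toSeq x i := by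
    intro i
    rw [pathM_add_diagonal_mulVec_apply, toSeq_succ, toSeq_succ, add_assoc, CharTwo.add_eq_zero]
  rw [funext_iff]
  exact ⟨fun h k hk => (hrow ⟨k, hk⟩).1 (h _), fun h i => (hrow i).2 (h i i.2)⟩

theorem pathM_add_diagonal_mulVec_eq_zero_iff_exists (f x : Fin n → ZMod 2) :
    (pathM n + diagonal f) *ᵥ x = 0 ↔ ∃ c : ZMod 2, c * continuant (toSeq f) (n + 1) = 0
      ∧ x = fun i : Fin n => c * continuant (toSeq f) (i + 1) := by
  rw [pathM_add_diagonal_mulVec_eq_zero_iff]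
  constructor
  · intro hrec
    have hx := eq_mul_continuant (toSeq_zero x) hrec
    refine ⟨toSeq x 1, ?_, funext fun i => ?_⟩
    · rw [← hx (n + 1) le_rfl, toSeq_of_lt x (Nat.lt_succ_self n)]
    · rw [← toSeq_succ x i, hx (i + 1) (by omega)]
  · rintro ⟨c, hc, rfl⟩ k hk
    have hx : ∀ k ≤ n + 1, toSeq (fun i : Fin n => c * continuant (toSeq f) (i + 1)) k
        = c * continuant (toSeq f) k := by
      rintro (_ | k) hk
      · simp [toSeq_zero, continuant]
      · obtain hk | rfl := Nat.lt_or_eq_of_le (Nat.le_of_succ_le_succ hk)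
        · exact toSeq_succ _ ⟨k, hk⟩
        · rw [toSeq_of_lt _ (Nat.lt_succ_self k), hc]
    rw [hx k (by omega), hx (k + 1) (by omega), hx (k + 2) (by omega), continuant]
    ring

theorem finrank_ker_pathM_add_diagonal (f : Fin n → ZMod 2) :
    finrank (ZMod 2) (LinearMap.ker (pathM n + diagonal f).mulVecLin)
      = if continuant (toSeq f) (n + 1) = 0 then 1 else 0 := by
  set v : Fin n → ZMod 2 := fun i => continuant (toSeq f) (i + 1)
  split_ifs with h
  · have hker : LinearMap.ker (pathM n + diagonal f).mulVecLin = Submodule.span (ZMod 2) {v} := by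
      ext x
      simp only [LinearMap.mem_ker, mulVecLin_apply, pathM_add_diagonal_mulVec_eq_zero_iff_exists,
        h, mul_zero, true_and, Submodule.mem_span_singleton, eq_comm (a := x)]
      rfl
    obtain _ | m := n
    · simp [continuant] at h
    · have hv : v 0 ≠ 0 := by simp [v, continuant]
      rw [hker, finrank_span_singleton fun hv0 => hv (congrFun hv0 0)]
  · have hker : LinearMap.ker (pathM n + diagonal f).mulVecLin = ⊥ := by
      refine (Submodule.eq_bot_iff _).2 fun x hx => ?_
      obtain ⟨c, hc, rfl⟩ := (pathM_add_diagonal_mulVec_eq_zero_iff_exists f x).1 hx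
      obtain rfl := (mul_eq_zero.1 hc).resolve_right h
      simp only [zero_mul]
      rfl
    rw [hker, finrank_bot]

theorem card_sub_rank_pathM_add_diagonal (f : Fin n → ZMod 2) :
    Fintype.card (Fin n) - (pathM n + diagonal f).rank
      = if continuant (toSeq f) (n + 1) = 0 then 1 else 0 := by
  have := LinearMap.finrank_range_add_finrank_ker (pathM n + diagonal f).mulVecLin
  rw [finrank_fintype_fun_eq_card] at this
  rw [← finrank_ker_pathM_add_diagonal, Matrix.rank]
  omega

end Kernel

section Transfer

def continuantStep (a : ZMod 2) (s : ZMod 2 × ZMod 2) : ZMod 2 × ZMod 2 :=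
  (a * s.1 + s.2, s.1)

def continuantState {n : ℕ} (f : Fin n → ZMod 2) : ZMod 2 × ZMod 2 :=
  (continuant (toSeq f) (n + 1), continuant (toSeq f) n)

theorem continuantState_snoc {n : ℕ} (f : Fin n → ZMod 2) (a : ZMod 2) :
    continuantState (Fin.snoc f a : Fin (n + 1) → ZMod 2)
      = continuantStep a (continuantState f) := by
  have hcongr := continuant_congr (g := toSeq f) (g' := toSeq (Fin.snoc f a : Fin (n + 1) → _))
    (m := n) fun k hk => by rw [toSeq_snoc, if_neg (by omega), add_zero]
  have hlast : toSeq (Fin.snoc f a : Fin (n + 1) → _) (n + 1) = a := by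
    rw [toSeq_snoc, toSeq_of_lt f (Nat.lt_succ_self n), if_pos rfl, zero_add]
  simp only [continuantState, continuantStep, continuant, hcongr (n + 1) le_rfl,
    hcongr n (Nat.le_succ n), hlast]

theorem sum_pi_fin_succ_eq_sum_snoc {M α : Type*} [AddCommMonoid M] [Fintype α] {n : ℕ}
    (F : (Fin (n + 1) → α) → M) :
    ∑ f, F f = ∑ f : Fin n → α, ∑ a, F (Fin.snoc f a) := by
  rw [← (Fin.snocEquiv fun _ => α).sum_comp, Fintype.sum_prod_type, sum_comm]
  rfl

variable {K : Type*} [CommRing K]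

def transfer (A B : K) (h : ZMod 2 × ZMod 2 → K) (s : ZMod 2 × ZMod 2) : K :=
  A * h (continuantStep 0 s) + B * h (continuantStep 1 s)

theorem sum_prod_mul_continuantState (A B : K) (n : ℕ) (h : ZMod 2 × ZMod 2 → K) :
    ∑ f : Fin n → ZMod 2, (∏ i, if f i = 0 then A else B) * h (continuantState f)
      = (transfer A B)^[n] h (1, 0) := by
  induction n generalizing h with
  | zero => simp [continuantState, continuant]
  | succ n ih =>
    rw [sum_pi_fin_succ_eq_sum_snoc, Function.iterate_succ_apply, ← ih]
    refine sum_congr rfl fun f _ => ?_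
    have hsum : ∀ F : ZMod 2 → K, ∑ a, F a = F 0 + F 1 := Fin.sum_univ_two
    simp only [hsum, Fin.prod_univ_castSucc, Fin.snoc_castSucc, Fin.snoc_last,
      continuantState_snoc, transfer, if_true, if_neg one_ne_zero]
    ring

theorem gBracket_pathM_eq_transfer_iterate (A B d : K) (n : ℕ) :
    gBracket (pathM n) A B d
      = (transfer A B)^[n] (fun s => if s.1 = 0 then d else 1) (1, 0) := by
  rw [gBracket_eq_sum_prod, ← sum_prod_mul_continuantState]
  refine sum_congr rfl fun f _ => ?_
  rw [card_sub_rank_pathM_add_diagonal, continuantState]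
  split_ifs <;> simp

end Transfer

section ClosedForm

variable {K : Type*} [CommRing K]

theorem transfer_apply_one_zero (A B : K) (h : ZMod 2 × ZMod 2 → K) :
    transfer A B h (1, 0) = A * h (0, 1) + B * h (1, 1) := rfl

theorem transfer_apply_zero_one (A B : K) (h : ZMod 2 × ZMod 2 → K) :
    transfer A B h (0, 1) = (A + B) * h (1, 0) := by
  rw [add_mul]
  rfl

theorem transfer_apply_one_one (A B : K) (h : ZMod 2 × ZMod 2 → K) :
    transfer A B h (1, 1) = A * h (1, 1) + B * h (0, 1) := rfl

/-- `-B + √(4A² - 3B²)`: twice an eigenvalue of the transfer matrix other than `A + B`; its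
conjugate gives the third eigenvalue. -/
def transferRoot (A B : K) : QuadraticAlgebra K (4 * A ^ 2 - 3 * B ^ 2) 0 := ⟨-B, 1⟩

theorem transferRoot_re (A B : K) : (transferRoot A B).re = -B := rfl

theorem transferRoot_im (A B : K) : (transferRoot A B).im = 1 := rfl

theorem transfer_iterate_closed_form (A B d : K) (n : ℕ) :
    let z := transferRoot A B ^ n
    let T := (transfer A B)^[n] fun s => if s.1 = 0 then d else 1
    3 * 2 ^ n * T (1, 0)
        = (d + 2) * 2 ^ n * (A + B) ^ n + (d - 1) * ((4 * A - 3 * B) * z.im - z.re) ∧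
      3 * 2 ^ n * T (0, 1)
        = (d + 2) * 2 ^ n * (A + B) ^ n + (d - 1) * (2 * z.re - 2 * A * z.im) ∧
      3 * 2 ^ n * T (1, 1)
        = (d + 2) * 2 ^ n * (A + B) ^ n + (d - 1) * ((3 * B - 2 * A) * z.im - z.re) := by
  induction n with
  | zero =>
    simp only [pow_zero, Function.iterate_zero, id_eq, QuadraticAlgebra.re_one,
      QuadraticAlgebra.im_one, one_ne_zero, ↓reduceIte]
    exact ⟨by ring, by ring, by ring⟩
  | succ n ih =>
    obtain ⟨h₁₀, h₀₁, h₁₁⟩ := ih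
    simp only [Function.iterate_succ_apply', transfer_apply_one_zero, transfer_apply_zero_one,
      transfer_apply_one_one, pow_succ, QuadraticAlgebra.re_mul, QuadraticAlgebra.im_mul,
      transferRoot_re, transferRoot_im]
    refine ⟨?_, ?_, ?_⟩
    · linear_combination 2 * A * h₀₁ + 2 * B * h₁₁
    · linear_combination 2 * (A + B) * h₁₀
    · linear_combination 2 * A * h₁₁ + 2 * B * h₀₁

end ClosedForm

end PathBracket

open PathBracket

/-- The closed formula for the bracket of the path `P_n`. -/
theorem graphBracket_path_closed_form (A B d : ℝ) (n : ℕ) :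
    gBracket (pathM n) A B d =
      (d + 2) / 3 * (A + B) ^ n
      - (d - 1) / (3 * 2 ^ n) *
          (if Even n then (4 * A ^ 2 - 3 * B ^ 2) ^ (n / 2) else 0)
      + (d - 1) / (3 * (2 : ℝ) ^ ((n : ℤ) - 2)) * A *
          ∑ j ∈ Finset.range ((n + 1) / 2),
            (4 * A ^ 2 - 3 * B ^ 2) ^ j * (-B) ^ (n - 2 * j - 1)
              * (n.choose (2 * j + 1) : ℝ)
      + (d - 1) / (3 * 2 ^ n) *
          ∑ j ∈ Finset.range ((n + 1) / 2),
            (4 * A ^ 2 - 3 * B ^ 2) ^ j * (-B) ^ (n - 2 * j)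
              * (3 * (n.choose (2 * j + 1) : ℝ) - (n.choose (2 * j) : ℝ)) := by
  obtain ⟨hT, -, -⟩ := transfer_iterate_closed_form A B d n
  have hS : ∑ j ∈ Finset.range ((n + 1) / 2), (4 * A ^ 2 - 3 * B ^ 2) ^ j * (-B) ^ (n - 2 * j)
        * (3 * (n.choose (2 * j + 1) : ℝ) - (n.choose (2 * j) : ℝ))
      = 3 * (-B * (transferRoot A B ^ n).im) - ∑ j ∈ Finset.range ((n + 1) / 2),
          (4 * A ^ 2 - 3 * B ^ 2) ^ j * (-B) ^ (n - 2 * j) * (n.choose (2 * j) : ℝ) := by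
    simp only [transferRoot, mul_im_mk_one_pow, Finset.mul_sum, ← Finset.sum_sub_distrib]
    exact Finset.sum_congr rfl fun j _ => by ring
  rw [transferRoot, re_mk_one_pow, im_mk_one_pow] at hT
  rw [hS, gBracket_pathM_eq_transfer_iterate, transferRoot, im_mk_one_pow,
    zpow_sub₀ two_ne_zero, zpow_natCast]
  set Q := ∑ j ∈ Finset.range ((n + 1) / 2),
    (4 * A ^ 2 - 3 * B ^ 2) ^ j * (-B) ^ (n - 2 * j - 1) * (n.choose (2 * j + 1) : ℝ)
  set R := ∑ j ∈ Finset.range ((n + 1) / 2),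
    (4 * A ^ 2 - 3 * B ^ 2) ^ j * (-B) ^ (n - 2 * j) * (n.choose (2 * j) : ℝ)
  set E := if Even n then (4 * A ^ 2 - 3 * B ^ 2) ^ (n / 2) else 0
  field_simp
  linear_combination hT
end

section
/- For every looped graph G on n vertices and every nonzero real number A, ⟨G⟩(−A) = (−1)^n·⟨G⟩(A). (Equivalently, the reduced graph bracket ⟨G⟩, as a Laurent polynomial in A, involves only powers A^k with k ≡ n (mod 2), so the graph Jones polynomial V_G(t) is a Laurent polynomial in t^{1/2}.) -/
open Matrix BigOperators

/- Each term of the bracket has total degree `ν(Δ) + ρ(Δ) = n` in `A` and `B`. -/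
theorem gBracket_neg_neg {V : Type*} [Fintype V] [DecidableEq V] {K : Type*} [CommRing K]
    (M : Matrix V V (ZMod 2)) (A B d : K) :
    gBracket M (-A) (-B) d = (-1) ^ Fintype.card V * gBracket M A B d := by
  unfold gBracket
  rw [Finset.mul_sum]
  refine Finset.sum_congr rfl fun f _ => ?_
  have hsign : (-1 : K) ^ (Fintype.card V - (diagonal f).rank) * (-1) ^ (diagonal f).rank
      = (-1) ^ Fintype.card V := by
    rw [← pow_add, Nat.sub_add_cancel (rank_le_card_width _)]
  rw [neg_pow A, neg_pow B, ← hsign]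
  ring

theorem reducedBracket_neg_general {n : ℕ} (M : Matrix (Fin n) (Fin n) (ZMod 2))
    (A : ℝ) :
    gBracketR M (-A) = (-1 : ℝ) ^ n * gBracketR M A := by
  unfold gBracketR
  rw [inv_neg, even_two.neg_pow, even_two.neg_pow, gBracket_neg_neg, Fintype.card_fin]

/-- `⟨G⟩(-A) = (-1)^n ⟨G⟩(A)`: the reduced graph bracket involves only powers
`A^k` with `k ≡ n (mod 2)`, so `V_G(t)` is a Laurent polynomial in `t^{1/2}`. -/
theorem reducedBracket_neg {n : ℕ} (M : Matrix (Fin n) (Fin n) (ZMod 2))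
    (hsym : M.IsSymm) (A : ℝ) (hA : A ≠ 0) :
    gBracketR M (-A) = (-1 : ℝ) ^ n * gBracketR M A :=
  reducedBracket_neg_general M A
end

section
/- Let G be a looped graph on vertex set V with Boolean adjacency matrix M, and let x, y be real numbers with x ≠ 1. Then ∑_{S ⊆ V} [G[S]](x−1, 0, (y−1)/(x−1)) = ∑_{S ⊆ V} (x−1)^{ρ(M[S])}·(y−1)^{ν(M[S])}, where for S ⊆ V, G[S] is the induced looped subgraph of G on S and M[S] is the corresponding principal submatrix of M; the right-hand side is the two-variable interlace polynomial q(G)(x,y) of Arratia, Bollobás and Sorkin. Thus q(G) is obtained from ∑_{S ⊆ V}[G[S]] by the evaluations A ↦ x−1, B ↦ 0, d ↦ (y−1)/(x−1). -/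
/-! At `B = 0` every term of the bracket except the one with `Δ = 0` vanishes, so
`[G](A, 0, d) = A^n d^{ν(M)}`. With `A = x - 1` and `d = (y - 1)/(x - 1)` this is
`(x - 1)^{ρ(M)} (y - 1)^{ν(M)}`, so the two sums agree term by term. -/

open Matrix BigOperators

theorem pow_mul_div_pow_sub {F : Type*} [Field F] {a : F} (ha : a ≠ 0) (b : F) {r n : ℕ}
    (h : r ≤ n) : a ^ n * (b / a) ^ (n - r) = a ^ r * b ^ (n - r) := by
  rw [div_pow, ← Nat.add_sub_cancel' h, pow_add, Nat.add_sub_cancel_left]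
  field_simp

theorem rank_diagonal_pos {V F : Type*} [Fintype V] [DecidableEq V] [Field F] {f : V → F}
    (hf : f ≠ 0) : 0 < (diagonal f).rank := by
  classical
  obtain ⟨i, hi⟩ := Function.ne_iff.mp hf
  rw [rank_diagonal]
  exact Fintype.card_pos_iff.mpr ⟨⟨i, hi⟩⟩

theorem gBracket_zero_B {V K : Type*} [Fintype V] [DecidableEq V] [CommRing K]
    (M : Matrix V V (ZMod 2)) (A d : K) :
    gBracket M A 0 d = A ^ Fintype.card V * d ^ (Fintype.card V - M.rank) := by
  unfold gBracket
  rw [Fintype.sum_eq_single 0 fun f hf => by rw [zero_pow (rank_diagonal_pos hf).ne']; ring]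
  simp

theorem sum_bracket_induced_eq_interlace_general {V : Type*} [Fintype V] [DecidableEq V]
    (M : Matrix V V (ZMod 2)) (x y : ℝ) (hx : x ≠ 1) :
    ∑ S : Finset V,
        gBracket (Matrix.of fun i j : {a : V // a ∈ S} => M i.1 j.1)
          (x - 1) (0 : ℝ) ((y - 1) / (x - 1))
      = ∑ S : Finset V,
        (x - 1) ^ (Matrix.of fun i j : {a : V // a ∈ S} => M i.1 j.1).rank
          * (y - 1) ^ (S.card - (Matrix.of fun i j : {a : V // a ∈ S} => M i.1 j.1).rank) := by
  refine Finset.sum_congr rfl fun S _ => ?_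
  rw [gBracket_zero_B, Fintype.card_coe]
  exact pow_mul_div_pow_sub (sub_ne_zero.mpr hx) _
    ((rank_le_card_width _).trans_eq (Fintype.card_coe S))

/-- The two-variable interlace polynomial
`q(G) = ∑_{S ⊆ V} (x-1)^{ρ(M[S])} (y-1)^{ν(M[S])}` is obtained from
`∑_{S ⊆ V} [G[S]]` by the evaluations `A ↦ x-1`, `B ↦ 0`, `d ↦ (y-1)/(x-1)`. -/
theorem sum_bracket_induced_eq_interlace {V : Type*} [Fintype V] [DecidableEq V]
    (M : Matrix V V (ZMod 2)) (hsym : M.IsSymm) (x y : ℝ) (hx : x ≠ 1) :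
    ∑ S : Finset V,
        gBracket (Matrix.of fun i j : {a : V // a ∈ S} => M i.1 j.1)
          (x - 1) (0 : ℝ) ((y - 1) / (x - 1))
      = ∑ S : Finset V,
        (x - 1) ^ (Matrix.of fun i j : {a : V // a ∈ S} => M i.1 j.1).rank
          * (y - 1) ^ (S.card - (Matrix.of fun i j : {a : V // a ∈ S} => M i.1 j.1).rank) :=
  sum_bracket_induced_eq_interlace_general M x y hx
end
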